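/- arXiv:1912.03888 — 9 statements merged into one kernel-verified Lean document; each statement's English description precedes it below -/
import Mathlib

section
/- Let c : ℝ^p → ℝ be given by c(z) = min(h(‖z‖), C_r), where h : ℝ≥0 → ℝ≥0 is non-decreasing, ‖·‖ is a norm on ℝ^p, and C_r > 0. For v ≥ 0 let B(v) denote the ball centered at the origin with (Lebesgue) volume v, and define F(v) = ∫_{B(v)} c(z) dz. Then F is convex on [0, ∞). -/
/-!
If `B(v)` is the ball of measure `v` and `c` is radial and non-decreasing, then
`F(b) - F(a)` is the integral of `c` over the annulus `B(b) \ B(a)` of measure `b - a`, on which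
`c` lies between its values on the spheres `∂B(a)` and `∂B(b)`. So every difference quotient of
`F` on `[a, b]` lies between `c|∂B(a)` and `c|∂B(b)`, and these are non-decreasing in the radius:
the slopes of `F` increase, i.e. `F` is convex.
-/

open MeasureTheory Metric Set

theorem convexOn_of_increment_bounds {s : Set ℝ} (hs : Convex ℝ s) {F g : ℝ → ℝ}
    (hlower : ∀ a ∈ s, ∀ b ∈ s, a < b → g a * (b - a) ≤ F b - F a)
    (hupper : ∀ a ∈ s, ∀ b ∈ s, a < b → F b - F a ≤ g b * (b - a)) :
    ConvexOn ℝ s F := by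
  refine convexOn_of_slope_mono_adjacent hs fun {x y z} hx hz hxy hyz => ?_
  have hy : y ∈ s := hs.ordConnected.out hx hz ⟨hxy.le, hyz.le⟩
  calc (F y - F x) / (y - x) ≤ g y := by
        rw [div_le_iff₀ (sub_pos.2 hxy)]; exact hupper x hx y hy hxy
    _ ≤ (F z - F y) / (z - y) := by
        rw [le_div_iff₀ (sub_pos.2 hyz)]; exact hlower y hy z hz hyz

section RadialIntegral

variable {X : Type*} [PseudoMetricSpace X] [MeasurableSpace X] {μ : Measure X} {x : X}
  {R : ℝ → ℝ}

theorem closedBall_subset_closedBall_of_measure_eq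
    (hR : ∀ v ∈ Ici 0, μ (closedBall x (R v)) = ENNReal.ofReal v) {a b : ℝ} (ha : 0 ≤ a)
    (hab : a ≤ b) : closedBall x (R a) ⊆ closedBall x (R b) := by
  rcases le_or_gt (R a) (R b) with hle | hlt
  · exact closedBall_subset_closedBall hle
  · have hmono := measure_mono (μ := μ) (closedBall_subset_closedBall hlt.le (x := x))
    rw [hR a ha, hR b (ha.trans hab), ENNReal.ofReal_le_ofReal_iff ha] at hmono
    rw [le_antisymm hab hmono]

variable [OpensMeasurableSpace X] {φ : ℝ → ℝ}

theorem integrableOn_closedBall_comp_dist (hφ : Monotone φ) {r : ℝ}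
    (hr : μ (closedBall x r) ≠ ⊤) :
    IntegrableOn (fun z => φ (dist z x)) (closedBall x r) μ := by
  have hmeas : Measurable fun z => φ (dist z x) :=
    hφ.measurable.comp (continuous_id.dist continuous_const).measurable
  refine Measure.integrableOn_of_bounded (M := max |φ 0| |φ r|) hr
    hmeas.aestronglyMeasurable (ae_restrict_of_forall_mem measurableSet_closedBall ?_)
  intro z hz
  exact abs_le_max_abs_abs (hφ dist_nonneg) (hφ (mem_closedBall.1 hz))

theorem measureReal_closedBall_diff_closedBall_of_measure_eq
    (hR : ∀ v ∈ Ici 0, μ (closedBall x (R v)) = ENNReal.ofReal v) {a b : ℝ} (ha : 0 ≤ a)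
    (hab : a ≤ b) :
    μ.real (closedBall x (R b) \ closedBall x (R a)) = b - a := by
  rw [measureReal_def, measure_sdiff (closedBall_subset_closedBall_of_measure_eq hR ha hab)
    measurableSet_closedBall.nullMeasurableSet (by simp [hR a ha]),
    hR a ha, hR b (ha.trans hab), ← ENNReal.ofReal_sub b ha,
    ENNReal.toReal_ofReal (sub_nonneg.2 hab)]

theorem mul_le_integral_closedBall_sub_le_mul (hφ : Monotone φ)
    (hR : ∀ v ∈ Ici 0, μ (closedBall x (R v)) = ENNReal.ofReal v) {a b : ℝ} (ha : 0 ≤ a)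
    (hab : a ≤ b) :
    φ (R a) * (b - a) ≤
        ∫ z in closedBall x (R b), φ (dist z x) ∂μ - ∫ z in closedBall x (R a), φ (dist z x) ∂μ ∧
      ∫ z in closedBall x (R b), φ (dist z x) ∂μ - ∫ z in closedBall x (R a), φ (dist z x) ∂μ ≤
        φ (R b) * (b - a) := by
  have hball : IntegrableOn (fun z => φ (dist z x)) (closedBall x (R b)) μ :=
    integrableOn_closedBall_comp_dist hφ (by simp [hR b (ha.trans hab)])
  rw [← setIntegral_sdiff measurableSet_closedBall hball
    (closedBall_subset_closedBall_of_measure_eq hR ha hab),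
    ← measureReal_closedBall_diff_closedBall_of_measure_eq hR ha hab]
  set A := closedBall x (R b) \ closedBall x (R a)
  have hA : MeasurableSet A := measurableSet_closedBall.diff measurableSet_closedBall
  have hAfin : μ A ≠ ⊤ := measure_ne_top_of_subset sdiff_subset (by simp [hR b (ha.trans hab)])
  have hint : IntegrableOn (fun z => φ (dist z x)) A μ := hball.mono_set sdiff_subset
  constructor
  · refine setIntegral_ge_of_const_le_real hA hAfin (fun z hz => hφ ?_) hint
    exact (not_le.1 (mem_closedBall.not.1 hz.2)).le
  · calc ∫ z in A, φ (dist z x) ∂μ ≤ ∫ _ in A, φ (R b) ∂μ :=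
          setIntegral_mono_on hint (integrableOn_const hAfin) hA
            fun z hz => hφ (mem_closedBall.1 hz.1)
      _ = φ (R b) * μ.real A := by rw [setIntegral_const, smul_eq_mul, mul_comm]

theorem convexOn_integral_closedBall_comp_dist (hφ : Monotone φ)
    (hR : ∀ v ∈ Ici 0, μ (closedBall x (R v)) = ENNReal.ofReal v) :
    ConvexOn ℝ (Ici 0) fun v => ∫ z in closedBall x (R v), φ (dist z x) ∂μ :=
  convexOn_of_increment_bounds (convex_Ici 0) (g := fun v => φ (R v))
    (fun _ ha _ _ hab => (mul_le_integral_closedBall_sub_le_mul hφ hR ha hab.le).1)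
    (fun _ ha _ _ hab => (mul_le_integral_closedBall_sub_le_mul hφ hR ha hab.le).2)

end RadialIntegral

theorem stmt0_general {E : Type*} [NormedAddCommGroup E]
    [MeasurableSpace E] [BorelSpace E]
    (μ : Measure E)
    (h : ℝ → ℝ) (hmono : Monotone h)
    (Cr : ℝ)
    (R : ℝ → ℝ)
    (hR : ∀ v ∈ Set.Ici (0 : ℝ), μ (closedBall (0 : E) (R v)) = ENNReal.ofReal v) :
    ConvexOn ℝ (Set.Ici (0 : ℝ))
      (fun v => ∫ z in closedBall (0 : E) (R v), min (h ‖z‖) Cr ∂μ) := by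
  simpa only [dist_zero_right] using
    convexOn_integral_closedBall_comp_dist (hmono.min monotone_const) hR

/-- With `c z = min (h ‖z‖) C_r` (h non-decreasing, non-negative, `C_r > 0`),
and `B(v)` the norm-ball centered at the origin of Lebesgue volume `v` (radius `R v`),
the function `F v = ∫_{B(v)} c z dz` is convex on `[0, ∞)`. -/
theorem stmt0 {E : Type*} [NormedAddCommGroup E] [NormedSpace ℝ E]
    [MeasurableSpace E] [BorelSpace E] [FiniteDimensional ℝ E]
    (μ : Measure E) [μ.IsAddHaarMeasure]
    (h : ℝ → ℝ) (hmono : Monotone h) (hnonneg : ∀ d, 0 ≤ h d)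
    (Cr : ℝ) (hCr : 0 < Cr)
    (R : ℝ → ℝ) (hRnonneg : ∀ v ∈ Set.Ici (0 : ℝ), 0 ≤ R v)
    (hR : ∀ v ∈ Set.Ici (0 : ℝ), μ (closedBall (0 : E) (R v)) = ENNReal.ofReal v) :
    ConvexOn ℝ (Set.Ici (0 : ℝ))
      (fun v => ∫ z in closedBall (0 : E) (R v), min (h ‖z‖) Cr ∂μ) :=
  stmt0_general μ h hmono Cr R hR
end

section
/- Let c : ℝ^p → ℝ be c(z) = min(h(‖z‖), C_r) with h non-decreasing non-negative and C_r > 0. For any y ∈ ℝ^p and any Lebesgue-measurable set A ⊆ ℝ^p of finite measure, ∫_A c(x − y) dx ≥ ∫_{B(y,|A|)} c(x − y) dx, where B(y,|A|) is the norm-ball centered at y with the same Lebesgue measure as A. -/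
open MeasureTheory Metric Set

/-!
Bathtub principle. Write `B` for the ball. Since `|A| = |B|`, the leftover pieces `A \ B` and
`B \ A` have equal measure. The integrand, non-decreasing in the distance to `y`, is at most
its value at distance `R` on `B \ A` and at least that value on `A \ B`, so trading `A \ B`
for `B \ A` can only lower the integral.
-/

section Bathtub

variable {α : Type*} [MeasurableSpace α] {μ : Measure α} {f : α → ℝ} {s t : Set α}

theorem setIntegral_le_setIntegral_of_measure_eq (c : ℝ) (hs : MeasurableSet s)
    (ht : MeasurableSet t) (hμ : μ s = μ t) (ht_fin : μ t ≠ ⊤)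
    (hfs : IntegrableOn f s μ) (hft : IntegrableOn f t μ)
    (hle : ∀ x ∈ s \ t, f x ≤ c) (hge : ∀ x ∈ t \ s, c ≤ f x) :
    ∫ x in s, f x ∂μ ≤ ∫ x in t, f x ∂μ := by
  have hs_fin : μ s ≠ ⊤ := hμ ▸ ht_fin
  have h_sdiff : μ (s \ t) = μ (t \ s) :=
    measure_sdiff_symm hs.nullMeasurableSet ht.nullMeasurableSet hμ
      (measure_ne_top_of_subset inter_subset_right ht_fin)
  have h_leftover : ∫ x in s \ t, f x ∂μ ≤ ∫ x in t \ s, f x ∂μ :=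
    calc ∫ x in s \ t, f x ∂μ
        ≤ ∫ _ in s \ t, c ∂μ :=
          setIntegral_mono_on (hfs.mono_set sdiff_subset)
            (integrableOn_const (measure_ne_top_of_subset sdiff_subset hs_fin)) (hs.diff ht) hle
      _ = μ.real (t \ s) • c := by simp only [setIntegral_const, Measure.real, h_sdiff]
      _ ≤ ∫ x in t \ s, f x ∂μ :=
          setIntegral_ge_of_const_le (ht.diff hs)
            (measure_ne_top_of_subset sdiff_subset ht_fin) hge (hft.mono_set sdiff_subset)
  rw [← integral_inter_add_sdiff ht hfs, ← integral_inter_add_sdiff hs hft, inter_comm t s]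
  gcongr

end Bathtub

section RadialMonotone

variable {α : Type*} [PseudoMetricSpace α] [MeasurableSpace α] [OpensMeasurableSpace α]
  {μ : Measure α} {g : ℝ → ℝ}

theorem integrableOn_comp_dist_of_monotone (hg : Monotone g) (hg_bdd : BddAbove (range g))
    (y : α) {s : Set α} (hs : μ s ≠ ⊤) : IntegrableOn (fun x => g (dist x y)) s μ := by
  obtain ⟨M, hM⟩ := hg_bdd
  refine Measure.integrableOn_of_bounded (M := max |g 0| |M|) hs
    (hg.measurable.comp (continuous_id.dist continuous_const).measurable).aestronglyMeasurable ?_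
  filter_upwards with x
  exact abs_le_max_abs_abs (hg dist_nonneg) (hM (mem_range_self _))

theorem setIntegral_closedBall_le_of_monotone (hg : Monotone g) (hg_bdd : BddAbove (range g))
    (y : α) {s : Set α} (hs : MeasurableSet s) (hs_fin : μ s ≠ ⊤) {R : ℝ}
    (hR : μ (closedBall y R) = μ s) :
    ∫ x in closedBall y R, g (dist x y) ∂μ ≤ ∫ x in s, g (dist x y) ∂μ :=
  setIntegral_le_setIntegral_of_measure_eq (g R) measurableSet_closedBall hs hR hs_fin
    (integrableOn_comp_dist_of_monotone hg hg_bdd y (hR ▸ hs_fin))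
    (integrableOn_comp_dist_of_monotone hg hg_bdd y hs_fin)
    (fun _ hx => hg hx.1) (fun _ hx => hg (not_le.mp hx.2).le)

end RadialMonotone

theorem stmt1_general {E : Type*} [NormedAddCommGroup E]
    [MeasurableSpace E] [BorelSpace E]
    (μ : Measure E)
    (h : ℝ → ℝ) (hmono : Monotone h)
    (Cr : ℝ)
    (y : E) (A : Set E) (hA : MeasurableSet A) (hAfin : μ A < ⊤)
    (R : ℝ) (hR : μ (closedBall y R) = μ A) :
    ∫ x in closedBall y R, min (h ‖x - y‖) Cr ∂μ ≤ ∫ x in A, min (h ‖x - y‖) Cr ∂μ := by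
  simp_rw [← dist_eq_norm]
  exact setIntegral_closedBall_le_of_monotone (hmono.min monotone_const)
    ⟨Cr, by rintro _ ⟨r, rfl⟩; exact min_le_right _ _⟩ y hA hAfin.ne hR

/-- With `c z = min (h ‖z‖) C_r`, for any `y` and any measurable set `A` of
finite measure, `∫_A c (x - y) dx ≥ ∫_{B(y,|A|)} c (x - y) dx`, where `B(y,|A|)` is the
norm-ball centered at `y` with the same Lebesgue measure as `A` (radius `R`). -/
theorem stmt1 {E : Type*} [NormedAddCommGroup E] [NormedSpace ℝ E]
    [MeasurableSpace E] [BorelSpace E] [FiniteDimensional ℝ E]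
    (μ : Measure E) [μ.IsAddHaarMeasure]
    (h : ℝ → ℝ) (hmono : Monotone h) (hnonneg : ∀ d, 0 ≤ h d)
    (Cr : ℝ) (hCr : 0 < Cr)
    (y : E) (A : Set E) (hA : MeasurableSet A) (hAfin : μ A < ⊤)
    (R : ℝ) (hRnonneg : 0 ≤ R) (hR : μ (closedBall y R) = μ A) :
    ∫ x in closedBall y R, min (h ‖x - y‖) Cr ∂μ ≤ ∫ x in A, min (h ‖x - y‖) Cr ∂μ :=
  stmt1_general μ h hmono Cr y A hA hAfin R hR
end

section
/- In the continuous similarity-caching setting with constant request rate λ > 0 over a compact set X ⊆ ℝ^p, for every cache state S consisting of k points y_1,…,y_k ∈ X, the expected cost satisfies 𝒞(S) = λ ∫_X min_{1≤h≤k} c(x − y_h) dx ≥ λ k F(|X|/k), where c(z) = min(h(‖z‖), C_r) and F(v) = ∫_{B(0,v)} c(z) dz. -/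
open MeasureTheory Metric Set
open scoped ENNReal NNReal

/-!
Since the cost `c z = min (h ‖z‖) C_r` is a non-decreasing function of `‖z‖`, each sublevel set
`A_t = {c ≤ t}` is comparable with the ball `B` of volume `|X| / k`: one contains the other.
The sublevel set `{min_h c (· - y_h) ≤ t}` is covered by the `k` translates `y_h + A_t`, so
its complement in `X` has measure at least `|X| - k |A_t| = k (|B| - |A_t|) = k |{c > t} ∩ B|`.
Comparing the superlevel sets of both integrands level by level and integrating over `t`
(layer cake) gives the bound.
-/

section LayerCake

variable {α β : Type*} [MeasurableSpace α] [MeasurableSpace β] {μ : Measure α} {ν : Measure β}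
  {φ : α → ℝ} {ψ : β → ℝ}

theorem const_mul_lintegral_le_of_measure_lt_le {c : ℝ≥0∞} (hφ : 0 ≤ᵐ[μ] φ)
    (hφm : AEMeasurable φ μ) (hψ : 0 ≤ᵐ[ν] ψ) (hψm : AEMeasurable ψ ν)
    (h : ∀ t, c * μ {x | t < φ x} ≤ ν {y | t < ψ y}) :
    c * ∫⁻ x, ENNReal.ofReal (φ x) ∂μ ≤ ∫⁻ y, ENNReal.ofReal (ψ y) ∂ν := by
  rw [lintegral_eq_lintegral_meas_lt μ hφ hφm, lintegral_eq_lintegral_meas_lt ν hψ hψm]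
  exact lintegral_const_mul_le _ _ |>.trans (lintegral_mono fun t => h t)

theorem const_mul_integral_le_of_measure_lt_le {c : ℝ≥0} (hφ : 0 ≤ᵐ[μ] φ)
    (hφm : AEStronglyMeasurable φ μ) (hψ : 0 ≤ᵐ[ν] ψ) (hψi : Integrable ψ ν)
    (h : ∀ t, c * μ {x | t < φ x} ≤ ν {y | t < ψ y}) :
    c * ∫ x, φ x ∂μ ≤ ∫ y, ψ y ∂ν := by
  rw [integral_eq_lintegral_of_nonneg_ae hφ hφm, integral_eq_lintegral_of_nonneg_ae hψ hψi.1]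
  simpa using ENNReal.toReal_mono hψi.lintegral_lt_top.ne
    (const_mul_lintegral_le_of_measure_lt_le hφ hφm.aemeasurable hψ hψi.1.aemeasurable h)

end LayerCake

theorem measure_iInf_sub_le_le_card_mul {G ι : Type*} [AddGroup G] [MeasurableSpace G]
    [MeasurableAdd G] (μ : Measure G) [μ.IsAddRightInvariant] [Fintype ι] [Nonempty ι]
    (c : G → ℝ) (S : ι → G) (t : ℝ) :
    μ {x | ⨅ i, c (x - S i) ≤ t} ≤ Fintype.card ι * μ {z | c z ≤ t} := by
  have hcover : {x | ⨅ i, c (x - S i) ≤ t} ⊆ ⋃ i, (· + -S i) ⁻¹' {z | c z ≤ t} := by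
    intro x hx
    obtain ⟨i, hi⟩ := exists_eq_ciInf_of_finite (f := fun i => c (x - S i))
    exact mem_iUnion.2 ⟨i, by simpa [← sub_eq_add_neg, hi] using hx⟩
  calc μ {x | ⨅ i, c (x - S i) ≤ t}
      ≤ ∑ i, μ ((· + -S i) ⁻¹' {z | c z ≤ t}) :=
        (measure_mono hcover).trans (measure_iUnion_fintype_le μ _)
    _ = Fintype.card ι * μ {z | c z ≤ t} := by
        simp only [measure_preimage_add_right, Finset.sum_const, Finset.card_univ, nsmul_eq_mul]

section Radial

variable {E : Type*} [NormedAddCommGroup E] {g : ℝ → ℝ}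

theorem closedBall_subset_or_subset_closedBall_of_monotone (hg : Monotone g) (t r : ℝ) :
    closedBall (0 : E) r ⊆ {z | g ‖z‖ ≤ t} ∨ {z : E | g ‖z‖ ≤ t} ⊆ closedBall 0 r := by
  refine or_iff_not_imp_left.2 fun hB a ha => ?_
  obtain ⟨b, hb, hbt⟩ := not_subset.1 hB
  have hab : ‖a‖ ≤ ‖b‖ := le_of_not_ge fun hba => hbt (le_trans (hg hba) ha)
  simpa using hab.trans (by simpa using hb)

variable [MeasurableSpace E] [OpensMeasurableSpace E] (μ : Measure E)

theorem measure_lt_inter_closedBall_of_monotone (hg : Monotone g) {r : ℝ}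
    (hB : μ (closedBall 0 r) ≠ ∞) (t : ℝ) :
    μ ({z | t < g ‖z‖} ∩ closedBall 0 r) = μ (closedBall 0 r) - μ {z : E | g ‖z‖ ≤ t} := by
  have hdiff : {z | t < g ‖z‖} ∩ closedBall (0 : E) r = closedBall 0 r \ {z | g ‖z‖ ≤ t} := by
    ext z; simp [and_comm]
  rw [hdiff]
  rcases closedBall_subset_or_subset_closedBall_of_monotone (E := E) hg t r with hBA | hAB
  · rw [sdiff_eq_empty.2 hBA, measure_empty, tsub_eq_zero_of_le (measure_mono hBA)]
  · exact measure_sdiff hAB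
      ((hg.measurable.comp measurable_norm) measurableSet_Iic).nullMeasurableSet
      (ne_top_of_le_ne_top hB (measure_mono hAB))

variable [MeasurableAdd E] [μ.IsAddRightInvariant]

theorem card_mul_measure_lt_inter_closedBall_le {ι : Type*} [Fintype ι] [Nonempty ι]
    (hg : Monotone g) (S : ι → E) {r : ℝ} {X : Set E} (hB : μ (closedBall 0 r) ≠ ∞)
    (hX : Fintype.card ι * μ (closedBall 0 r) ≤ μ X) (t : ℝ) :
    Fintype.card ι * μ ({z | t < g ‖z‖} ∩ closedBall 0 r) ≤
      μ ({x | t < ⨅ i, g ‖x - S i‖} ∩ X) := by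
  have hcompl : X \ {x | ⨅ i, g ‖x - S i‖ ≤ t} = {x | t < ⨅ i, g ‖x - S i‖} ∩ X := by
    ext x; simp [and_comm]
  calc (Fintype.card ι : ℝ≥0∞) * μ ({z | t < g ‖z‖} ∩ closedBall 0 r)
      = Fintype.card ι * μ (closedBall 0 r) - Fintype.card ι * μ {z | g ‖z‖ ≤ t} := by
        rw [measure_lt_inter_closedBall_of_monotone μ hg hB,
          ENNReal.mul_sub fun _ _ => ENNReal.natCast_ne_top _]
    _ ≤ μ X - μ {x | ⨅ i, g ‖x - S i‖ ≤ t} :=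
        tsub_le_tsub hX (measure_iInf_sub_le_le_card_mul μ (fun z => g ‖z‖) S t)
    _ ≤ μ ({x | t < ⨅ i, g ‖x - S i‖} ∩ X) := hcompl ▸ le_measure_sdiff

theorem card_mul_setIntegral_closedBall_le {ι : Type*} [Fintype ι] [Nonempty ι] [MeasurableSub E]
    (hg : Monotone g) (hg_nonneg : ∀ d, 0 ≤ g d) {M : ℝ} (hg_le : ∀ d, g d ≤ M) (S : ι → E)
    {r : ℝ} {X : Set E} (hXm : MeasurableSet X) (hXfin : μ X ≠ ∞)
    (hX : Fintype.card ι * μ (closedBall 0 r) ≤ μ X) :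
    Fintype.card ι * ∫ z in closedBall 0 r, g ‖z‖ ∂μ ≤ ∫ x in X, ⨅ i, g ‖x - S i‖ ∂μ := by
  have hB : μ (closedBall 0 r) ≠ ∞ := ne_top_of_le_ne_top hXfin <|
    le_mul_of_one_le_left' (by exact_mod_cast Fintype.card_pos) |>.trans hX
  have hcost_meas : Measurable fun x => ⨅ i, g ‖x - S i‖ :=
    Measurable.iInf fun i => (hg.measurable.comp measurable_norm).comp (measurable_sub_const _)
  have hcost_nonneg (x : E) : 0 ≤ ⨅ i, g ‖x - S i‖ := Real.iInf_nonneg fun i => hg_nonneg _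
  have hcost_int : IntegrableOn (fun x => ⨅ i, g ‖x - S i‖) X μ := by
    refine Measure.integrableOn_of_bounded hXfin hcost_meas.aestronglyMeasurable
      (M := M) (ae_of_all _ fun x => ?_)
    rw [Real.norm_of_nonneg (hcost_nonneg x)]
    exact (Finite.ciInf_le _ (Classical.arbitrary ι)).trans (hg_le _)
  have hlevel (t : ℝ) : (Fintype.card ι : ℝ≥0) * μ.restrict (closedBall 0 r) {z | t < g ‖z‖} ≤
      μ.restrict X {x | t < ⨅ i, g ‖x - S i‖} := by
    rw [Measure.restrict_apply' measurableSet_closedBall, Measure.restrict_apply' hXm]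
    exact_mod_cast card_mul_measure_lt_inter_closedBall_le μ hg S hB hX t
  exact_mod_cast const_mul_integral_le_of_measure_lt_le (ae_of_all _ fun z => hg_nonneg ‖z‖)
    (hg.measurable.comp measurable_norm).aestronglyMeasurable (ae_of_all _ hcost_nonneg)
    hcost_int hlevel

end Radial

theorem stmt2_general {E : Type*} [NormedAddCommGroup E] [NormedSpace ℝ E]
    [MeasurableSpace E] [BorelSpace E] [FiniteDimensional ℝ E]
    (μ : Measure E) [μ.IsAddHaarMeasure]
    (h : ℝ → ℝ) (hmono : Monotone h) (hnonneg : ∀ d, 0 ≤ h d)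
    (Cr : ℝ) (hCr : 0 < Cr)
    (X : Set E) (hX : IsCompact X)
    (lam : ℝ) (hlam : 0 < lam)
    (k : ℕ) (hk : 0 < k)
    (S : Fin k → E)
    (R : ℝ → ℝ)
    (hR : ∀ v ∈ Set.Ici (0 : ℝ), μ (closedBall (0 : E) (R v)) = ENNReal.ofReal v) :
    lam * (k : ℝ) *
        ∫ z in closedBall (0 : E) (R ((μ X).toReal / k)), min (h ‖z‖) Cr ∂μ ≤
      lam * ∫ x in X, ⨅ i : Fin k, min (h ‖x - S i‖) Cr ∂μ := by
  have : Nonempty (Fin k) := ⟨⟨0, hk⟩⟩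
  have hg : Monotone fun d => min (h d) Cr := fun a b hab => min_le_min_right Cr (hmono hab)
  have hkB : (k : ℝ≥0∞) * μ (closedBall 0 (R ((μ X).toReal / k))) = μ X := by
    rw [hR _ (mem_Ici.2 (by positivity)), ← ENNReal.ofReal_natCast,
      ← ENNReal.ofReal_mul (Nat.cast_nonneg k), mul_div_cancel₀ _ (Nat.cast_ne_zero.2 hk.ne'),
      ENNReal.ofReal_toReal hX.measure_ne_top]
  rw [mul_assoc]
  gcongr
  simpa using card_mul_setIntegral_closedBall_le μ hg (fun d => le_min (hnonneg d) hCr.le)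
    (fun d => min_le_right _ Cr) S hX.measurableSet hX.measure_ne_top (by simpa using hkB.le)

/-- In the continuous similarity-caching setting with constant request rate
`λ > 0` over a compact set `X`, for every cache state `S = {y_1,…,y_k} ⊆ X`,
`𝒞(S) = λ ∫_X min_h c (x - y_h) dx ≥ λ k F(|X|/k)`, where `c z = min (h ‖z‖) C_r` and
`F v = ∫_{B(0,v)} c z dz` (the ball `B(0,v)` of volume `v` has radius `R v`). -/
theorem stmt2 {E : Type*} [NormedAddCommGroup E] [NormedSpace ℝ E]
    [MeasurableSpace E] [BorelSpace E] [FiniteDimensional ℝ E]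
    (μ : Measure E) [μ.IsAddHaarMeasure]
    (h : ℝ → ℝ) (hmono : Monotone h) (hnonneg : ∀ d, 0 ≤ h d)
    (Cr : ℝ) (hCr : 0 < Cr)
    (X : Set E) (hX : IsCompact X)
    (lam : ℝ) (hlam : 0 < lam)
    (k : ℕ) (hk : 0 < k)
    (S : Fin k → E) (hS : ∀ i, S i ∈ X)
    (R : ℝ → ℝ) (hRnonneg : ∀ v ∈ Set.Ici (0 : ℝ), 0 ≤ R v)
    (hR : ∀ v ∈ Set.Ici (0 : ℝ), μ (closedBall (0 : E) (R v)) = ENNReal.ofReal v) :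
    lam * (k : ℝ) *
        ∫ z in closedBall (0 : E) (R ((μ X).toReal / k)), min (h ‖z‖) Cr ∂μ ≤
      lam * ∫ x in X, ⨅ i : Fin k, min (h ‖x - S i‖) Cr ∂μ :=
  stmt2_general μ h hmono hnonneg Cr hCr X hX lam hlam k hk S R hR
end

section
/- Under the assumptions of the previous bound, let d̄ = inf{d : h(d) = C_r}, and suppose S = {y_1,…,y_k} is such that the closed balls B_{d̄}(y_h) of radius d̄ centered at the y_h are contained in X and pairwise intersect in sets of Lebesgue measure zero. Then S achieves the lower bound, i.e., 𝒞(S) = min over all cache states S' of size k of 𝒞(S'). -/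
open MeasureTheory Metric

private lemma ciInf_sub_aux {k : ℕ} (hk : 0 < k) (Cr : ℝ) (g : Fin k → ℝ) :
    ⨅ i, (Cr - g i) = Cr - ⨆ i, g i := by
  haveI : Nonempty (Fin k) := Fin.pos_iff_nonempty.mp hk
  obtain ⟨j, hj⟩ := Finite.exists_max g
  have hsup : ⨆ i, g i = g j :=
    le_antisymm (ciSup_le hj) (le_ciSup (Finite.bddAbove_range g) j)
  rw [hsup]
  refine le_antisymm ((ciInf_le (Finite.bddBelow_range _) j)) ?_
  exact le_ciInf fun i => sub_le_sub_left (hj i) Cr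

/-- Corollary 1: In the continuous homogeneous setting, let
`d̄ = inf {d : h d = C_r}` (assumed attained for some `d`). If the closed balls of radius
`d̄` centered at the cached points `y_1,…,y_k` are contained in `X` and pairwise intersect
in sets of measure zero, then the cache state minimizes the expected cost
`𝒞(S) = λ ∫_X min_i c (x - y_i) dx` over all cache states of `k` points of `X`. -/
theorem stmt3 {E : Type*} [NormedAddCommGroup E] [NormedSpace ℝ E]
    [MeasurableSpace E] [BorelSpace E] [FiniteDimensional ℝ E]
    (μ : Measure E) [μ.IsAddHaarMeasure]
    (h : ℝ → ℝ) (hmono : Monotone h) (hnonneg : ∀ d, 0 ≤ h d)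
    (Cr : ℝ) (hCr : 0 < Cr) (hreach : ∃ d : ℝ, h d = Cr)
    (X : Set E) (hX : IsCompact X)
    (lam : ℝ) (hlam : 0 < lam)
    (k : ℕ) (hk : 0 < k)
    (S : Fin k → E) (hS : ∀ i, S i ∈ X)
    (dbar : ℝ) (hdbar : dbar = sInf {d : ℝ | h d = Cr})
    (hballs : ∀ i, closedBall (S i) dbar ⊆ X)
    (hdisj : ∀ i j : Fin k, i ≠ j →
      μ (closedBall (S i) dbar ∩ closedBall (S j) dbar) = 0) :
    ∀ S' : Fin k → E, (∀ i, S' i ∈ X) →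
      lam * ∫ x in X, ⨅ i : Fin k, min (h ‖x - S i‖) Cr ∂μ ≤
        lam * ∫ x in X, ⨅ i : Fin k, min (h ‖x - S' i‖) Cr ∂μ := by
  intro S' hS'
  haveI : Nonempty (Fin k) := Fin.pos_iff_nonempty.mp hk
  set φ : E → ℝ := fun z => Cr - min (h ‖z‖) Cr with hφ
  have hφmeas : Measurable φ :=
    measurable_const.sub ((hmono.measurable.comp measurable_norm).min measurable_const)
  have hφnn : ∀ z, 0 ≤ φ z := fun z => sub_nonneg.mpr (min_le_right _ _)
  have hφle : ∀ z, φ z ≤ Cr := by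
    intro z
    have h0 : 0 ≤ min (h ‖z‖) Cr := le_min (hnonneg _) hCr.le
    simp only [hφ]
    linarith
  -- φ vanishes outside the closed ball of radius dbar
  have hφ0 : ∀ z : E, dbar < ‖z‖ → φ z = 0 := by
    intro z hz
    have hne : {d : ℝ | h d = Cr}.Nonempty := hreach
    obtain ⟨a, ha, hlt⟩ := exists_lt_of_csInf_lt hne (hdbar ▸ hz)
    have hge : Cr ≤ h ‖z‖ := ha ▸ hmono hlt.le
    simp [hφ, min_eq_right hge]
  -- φ is integrable on all of E
  have hφint : Integrable φ μ := by
    have hball : IntegrableOn φ (closedBall (0 : E) dbar) μ := by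
      refine Integrable.mono' (g := fun _ => Cr)
        ((integrableOn_const_iff (C := Cr)).mpr (Or.inr measure_closedBall_lt_top))
        hφmeas.aestronglyMeasurable ?_
      filter_upwards with x
      rw [Real.norm_eq_abs, abs_of_nonneg (hφnn x)]
      exact hφle x
    have heq : φ = Set.indicator (closedBall (0 : E) dbar) φ := by
      funext x
      by_cases hx : x ∈ closedBall (0 : E) dbar
      · simp [hx]
      · have : dbar < ‖x‖ := by
          simpa [mem_closedBall, dist_zero_right, not_le] using hx
        simp [hx, hφ0 x this]
    rw [heq]
    exact (integrable_indicator_iff measurableSet_closedBall).mpr hball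
  have hφint' : ∀ a : E, Integrable (fun x => φ (x - a)) μ :=
    fun a => hφint.comp_sub_right a
  have hXfin : μ X < ⊤ := hX.measure_lt_top
  -- the sup function
  have hGmeas : ∀ T : Fin k → E, Measurable (fun x => ⨆ i, φ (x - T i)) := by
    intro T
    have hne : (Finset.univ : Finset (Fin k)).Nonempty := Finset.univ_nonempty
    have hm := Finset.measurable_sup' hne
      (f := fun i (x : E) => φ (x - T i))
      (fun i _ => hφmeas.comp (measurable_id.sub_const (T i)))
    have heq : (Finset.univ.sup' hne fun i (x : E) => φ (x - T i)) =
        fun x => ⨆ i, φ (x - T i) := by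
      funext x
      rw [Finset.sup'_apply]
      exact Finset.sup'_univ_eq_ciSup _
    rwa [heq] at hm
  have hGnn : ∀ (T : Fin k → E) x, 0 ≤ ⨆ i, φ (x - T i) := by
    intro T x
    exact le_trans (hφnn _)
      (le_ciSup (f := fun i => φ (x - T i)) (Finite.bddAbove_range _) (⟨0, hk⟩ : Fin k))
  have hGle : ∀ (T : Fin k → E) x, (⨆ i, φ (x - T i)) ≤ Cr :=
    fun T x => ciSup_le fun i => hφle _
  have hGint : ∀ T : Fin k → E, IntegrableOn (fun x => ⨆ i, φ (x - T i)) X μ := by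
    intro T
    refine Integrable.mono' (g := fun _ => Cr)
      ((integrableOn_const_iff (C := Cr)).mpr (Or.inr hXfin))
      (hGmeas T).aestronglyMeasurable ?_
    filter_upwards with x
    rw [Real.norm_eq_abs, abs_of_nonneg (hGnn T x)]
    exact hGle T x
  -- rewrite the cost integral
  have hrw : ∀ T : Fin k → E,
      ∫ x in X, ⨅ i : Fin k, min (h ‖x - T i‖) Cr ∂μ
        = (μ X).toReal * Cr - ∫ x in X, (⨆ i, φ (x - T i)) ∂μ := by
    intro T
    have h1 : ∀ x, (⨅ i : Fin k, min (h ‖x - T i‖) Cr) = Cr - ⨆ i, φ (x - T i) := by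
      intro x
      have h2 : ∀ i : Fin k, min (h ‖x - T i‖) Cr = Cr - φ (x - T i) := by
        intro i
        simp only [hφ, sub_sub_cancel]
      simp_rw [h2]
      exact ciInf_sub_aux hk Cr _
    simp_rw [h1]
    rw [integral_sub ((integrableOn_const_iff (C := Cr)).mpr (Or.inr hXfin)) (hGint T), setIntegral_const]
    simp [smul_eq_mul, measureReal_def]
  -- translations integrate to the same thing
  have htrans : ∀ a : E, ∫ x, φ (x - a) ∂μ = ∫ x, φ x ∂μ :=
    fun a => integral_sub_right_eq_self φ a
  -- (B): for S, the sup integrates to k * ∫ φ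
  have hBS : ∫ x in X, (⨆ i, φ (x - S i)) ∂μ = (k : ℝ) * ∫ x, φ x ∂μ := by
    have hN : μ (⋃ p : Fin k × Fin k, ⋃ (_ : p.1 ≠ p.2),
        closedBall (S p.1) dbar ∩ closedBall (S p.2) dbar) = 0 := by
      refine measure_iUnion_null fun p => ?_
      by_cases hp : p.1 ≠ p.2
      · rw [Set.iUnion_eq_if, if_pos hp]
        exact hdisj p.1 p.2 hp
      · rw [Set.iUnion_eq_if, if_neg hp]
        simp
    have hae : ∀ᵐ x ∂(μ.restrict X),
        (⨆ i, φ (x - S i)) = ∑ i : Fin k, φ (x - S i) := by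
      refine ae_restrict_of_ae ?_
      filter_upwards [measure_eq_zero_iff_ae_notMem.mp hN] with x hx
      have hx' : ∀ i j : Fin k, i ≠ j →
          ¬(x ∈ closedBall (S i) dbar ∧ x ∈ closedBall (S j) dbar) := by
        intro i j hij hmem
        exact hx (Set.mem_iUnion.mpr ⟨(i, j), Set.mem_iUnion.mpr ⟨hij, hmem.1, hmem.2⟩⟩)
      have hmem : ∀ j, φ (x - S j) ≠ 0 → x ∈ closedBall (S j) dbar := by
        intro j hj
        by_contra hxj
        exact hj (hφ0 _ (by simpa [mem_closedBall, dist_eq_norm, not_le] using hxj))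
      by_cases hex : ∃ i, φ (x - S i) ≠ 0
      · obtain ⟨i0, hi0⟩ := hex
        have hz : ∀ j, j ≠ i0 → φ (x - S j) = 0 := by
          intro j hj
          by_contra hjne
          exact hx' j i0 hj ⟨hmem j hjne, hmem i0 hi0⟩
        have hsum : ∑ i : Fin k, φ (x - S i) = φ (x - S i0) :=
          Finset.sum_eq_single_of_mem i0 (Finset.mem_univ _) (fun j _ hj => hz j hj)
        have hsup : (⨆ i, φ (x - S i)) = φ (x - S i0) := by
          refine le_antisymm (ciSup_le fun i => ?_)
            (le_ciSup (f := fun i => φ (x - S i)) (Finite.bddAbove_range _) i0)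
          rcases eq_or_ne i i0 with rfl | hi
          · exact le_rfl
          · rw [hz i hi]; exact hφnn _
        rw [hsup, hsum]
      · push_neg at hex
        simp [hex, ciSup_const]
    rw [integral_congr_ae hae,
      integral_finset_sum _ (fun i _ => (hφint' (S i)).integrableOn)]
    have hfull : ∀ i : Fin k, ∫ x in X, φ (x - S i) ∂μ = ∫ x, φ x ∂μ := by
      intro i
      rw [setIntegral_eq_integral_of_forall_compl_eq_zero, htrans (S i)]
      intro x hx
      have hxb : x ∉ closedBall (S i) dbar := fun hmem => hx (hballs i hmem)
      exact hφ0 _ (by simpa [mem_closedBall, dist_eq_norm, not_le] using hxb)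
    simp [hfull]
  -- (A): for any S', the sup integrates to at most k * ∫ φ
  have hA : ∫ x in X, (⨆ i, φ (x - S' i)) ∂μ ≤ (k : ℝ) * ∫ x, φ x ∂μ := by
    have h1 : ∫ x in X, (⨆ i, φ (x - S' i)) ∂μ
        ≤ ∫ x in X, (∑ i : Fin k, φ (x - S' i)) ∂μ := by
      refine integral_mono (hGint S')
        (integrable_finset_sum _ (fun i _ => (hφint' (S' i)).integrableOn)) ?_
      intro x
      exact ciSup_le fun i =>
        Finset.single_le_sum (f := fun j => φ (x - S' j)) (fun j _ => hφnn _) (Finset.mem_univ i)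
    have h2 : ∫ x in X, (∑ i : Fin k, φ (x - S' i)) ∂μ
        = ∑ i : Fin k, ∫ x in X, φ (x - S' i) ∂μ :=
      integral_finset_sum _ (fun i _ => (hφint' (S' i)).integrableOn)
    have h3 : ∀ i : Fin k, ∫ x in X, φ (x - S' i) ∂μ ≤ ∫ x, φ x ∂μ := by
      intro i
      calc ∫ x in X, φ (x - S' i) ∂μ ≤ ∫ x, φ (x - S' i) ∂μ :=
            setIntegral_le_integral (hφint' (S' i)) (Filter.Eventually.of_forall fun x => hφnn _)
        _ = ∫ x, φ x ∂μ := htrans (S' i)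
    calc ∫ x in X, (⨆ i, φ (x - S' i)) ∂μ
        ≤ ∑ i : Fin k, ∫ x in X, φ (x - S' i) ∂μ := h1.trans h2.le
      _ ≤ ∑ _i : Fin k, ∫ x, φ x ∂μ := Finset.sum_le_sum fun i _ => h3 i
      _ = (k : ℝ) * ∫ x, φ x ∂μ := by simp [Finset.sum_const, nsmul_eq_mul]
  have key : ∫ x in X, (⨆ i, φ (x - S' i)) ∂μ ≤ ∫ x in X, (⨆ i, φ (x - S i)) ∂μ := by
    rw [hBS]; exact hA
  rw [hrw S, hrw S']
  exact mul_le_mul_of_nonneg_left (by linarith) hlam.le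
end

section
/- In the continuous homogeneous setting, if there exists d > 0 and a cache state S = {y_1,…,y_k} such that the balls B_d(y_h), h = 1,…,k, tessellate X (their union is X and pairwise intersections have measure zero), then S minimizes the expected cost 𝒞(S) = λ∫_X min_{y∈S} c(x − y) dx over all sets of k points in X. -/
/-!
Since the cost `c` is radially non-decreasing, each sublevel set `A = {c ≤ t}` is either contained
in the ball `B = B_d(0)` or contains it. For any configuration of `k` points, the part of `X` where
the cost is `≤ t` is covered by `k` translates of `A` and lies in `X`, whose measure is `k |B|`;
so its measure is at most `k min(|A|, |B|) = k |A ∩ B|`. For the tessellating configuration it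
contains the `k` almost disjoint translates of `A ∩ B`, so the bound is attained. The cost of the
tessellation is thus stochastically smallest, and the layer-cake formula turns this into the
inequality between integrals.
-/

open MeasureTheory Metric Pointwise
open scoped ENNReal

theorem ciInf_le_iff_exists_le_of_finite {ι α : Type*} [ConditionallyCompleteLinearOrder α]
    [Nonempty ι] [Finite ι] {f : ι → α} {a : α} : ⨅ i, f i ≤ a ↔ ∃ i, f i ≤ a := by
  refine ⟨fun h => ?_, fun ⟨i, hi⟩ => (ciInf_le (Set.finite_range f).bddBelow i).trans hi⟩
  obtain ⟨i, hi⟩ := exists_eq_ciInf_of_finite (f := f)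
  exact ⟨i, hi ▸ h⟩

section LayerCake

variable {α : Type*} [MeasurableSpace α] {ν : Measure α} [IsFiniteMeasure ν] {f g : α → ℝ}

theorem measure_setOf_lt_le_of_measure_setOf_le_le (hf : Measurable f) (hg : Measurable g)
    (H : ∀ t, ν {x | g x ≤ t} ≤ ν {x | f x ≤ t}) (t : ℝ) :
    ν {x | t < f x} ≤ ν {x | t < g x} := by
  simp only [← not_le, ← Set.compl_ofPred]
  rw [measure_compl (measurableSet_le hf measurable_const) (measure_ne_top _ _),
    measure_compl (measurableSet_le hg measurable_const) (measure_ne_top _ _)]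
  exact tsub_le_tsub_left (H t) _

theorem integral_le_integral_of_measure_setOf_le_le (hf0 : 0 ≤ f) (hg0 : 0 ≤ g)
    (hf : Measurable f) (hg : Measurable g) (hgi : Integrable g ν)
    (H : ∀ t, ν {x | g x ≤ t} ≤ ν {x | f x ≤ t}) :
    ∫ x, f x ∂ν ≤ ∫ x, g x ∂ν := by
  have hlint : ∫⁻ x, ENNReal.ofReal (f x) ∂ν ≤ ∫⁻ x, ENNReal.ofReal (g x) ∂ν := by
    rw [lintegral_eq_lintegral_meas_lt ν (ae_of_all _ hf0) hf.aemeasurable,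
      lintegral_eq_lintegral_meas_lt ν (ae_of_all _ hg0) hg.aemeasurable]
    exact lintegral_mono fun t => measure_setOf_lt_le_of_measure_setOf_le_le hf hg H t
  rw [integral_eq_lintegral_of_nonneg_ae (ae_of_all _ hf0) hf.aestronglyMeasurable,
    integral_eq_lintegral_of_nonneg_ae (ae_of_all _ hg0) hg.aestronglyMeasurable]
  exact ENNReal.toReal_mono hgi.lintegral_lt_top.ne hlint

end LayerCake

section Translates

variable {G : Type*} [AddGroup G] [MeasurableSpace G] {μ : Measure G}
  [μ.IsAddLeftInvariant] {ι : Type*} [Fintype ι]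

theorem measure_iUnion_vadd_le (y : ι → G) (s : Set G) :
    μ (⋃ i, y i +ᵥ s) ≤ Fintype.card ι * μ s := by
  refine (measure_iUnion_fintype_le μ _).trans_eq ?_
  simp [measure_vadd]

theorem measure_iUnion_vadd_eq [MeasurableAdd G] (y : ι → G) {s : Set G} (hs : MeasurableSet s)
    (hdisj : Pairwise fun i j => AEDisjoint μ (y i +ᵥ s) (y j +ᵥ s)) :
    μ (⋃ i, y i +ᵥ s) = Fintype.card ι * μ s := by
  rw [measure_iUnion₀ hdisj fun i => (hs.const_vadd (y i)).nullMeasurableSet, tsum_fintype]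
  simp [measure_vadd]

end Translates

theorem setOf_iInf_sub_le_eq_iUnion_vadd {G ι : Type*} [AddCommGroup G] [Nonempty ι] [Finite ι]
    (c : G → ℝ) (y : ι → G) (t : ℝ) :
    {x | ⨅ i, c (x - y i) ≤ t} = ⋃ i, y i +ᵥ {z | c z ≤ t} := by
  ext x
  simp [ciInf_le_iff_exists_le_of_finite, Set.mem_vadd_set_iff_neg_vadd_mem, neg_add_eq_sub]

theorem setOf_le_subset_closedBall_or_closedBall_subset {E : Type*} [SeminormedAddGroup E]
    {c : E → ℝ} (hc : ∀ z w : E, ‖z‖ ≤ ‖w‖ → c z ≤ c w) (t r : ℝ) :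
    {z | c z ≤ t} ⊆ closedBall 0 r ∨ closedBall 0 r ⊆ {z | c z ≤ t} := by
  refine or_iff_not_imp_left.2 fun h z hz => ?_
  obtain ⟨w, hwt, hwr⟩ := Set.not_subset.1 h
  rw [mem_closedBall_zero_iff] at hz hwr
  exact (hc z w (by linarith)).trans hwt

section Tessellation

variable {E : Type*} [NormedAddCommGroup E] [MeasurableSpace E] [BorelSpace E]
  {μ : Measure E} [μ.IsAddLeftInvariant] {c : E → ℝ} {ι : Type*} [Fintype ι] [Nonempty ι]
  {y : ι → E} {d : ℝ} {X : Set E}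

theorem measure_setOf_iInf_sub_le_inter_le_of_tessellation (hcm : Measurable c)
    (hc : ∀ z w : E, ‖z‖ ≤ ‖w‖ → c z ≤ c w) (hcover : ⋃ i, closedBall (y i) d = X)
    (hdisj : Pairwise fun i j => μ (closedBall (y i) d ∩ closedBall (y j) d) = 0)
    (y' : ι → E) (t : ℝ) :
    μ ({x | ⨅ i, c (x - y' i) ≤ t} ∩ X) ≤ μ ({x | ⨅ i, c (x - y i) ≤ t} ∩ X) := by
  set A := {z | c z ≤ t}
  set B := closedBall (0 : E) d
  have hX : X = ⋃ i, y i +ᵥ B := by simpa [B, vadd_closedBall] using hcover.symm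
  have htile : ∀ s ⊆ B, MeasurableSet s → μ (⋃ i, y i +ᵥ s) = Fintype.card ι * μ s :=
    fun s hsB hs => measure_iUnion_vadd_eq y hs fun i j hij => measure_mono_null
      (Set.inter_subset_inter (Set.vadd_set_mono hsB) (Set.vadd_set_mono hsB))
      (by simpa [B, vadd_closedBall] using hdisj hij)
  have hupper : μ ({x | ⨅ i, c (x - y' i) ≤ t} ∩ X) ≤ Fintype.card ι * μ (A ∩ B) := by
    rcases setOf_le_subset_closedBall_or_closedBall_subset hc t d with hAB | hBA
    · rw [Set.inter_eq_left.2 hAB]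
      refine (measure_mono Set.inter_subset_left).trans ?_
      rw [setOf_iInf_sub_le_eq_iUnion_vadd]
      exact measure_iUnion_vadd_le y' A
    · rw [Set.inter_eq_right.2 hBA, ← htile B subset_rfl measurableSet_closedBall, ← hX]
      exact measure_mono Set.inter_subset_right
  have hlower : ⋃ i, y i +ᵥ (A ∩ B) ⊆ {x | ⨅ i, c (x - y i) ≤ t} ∩ X := by
    rw [hX, setOf_iInf_sub_le_eq_iUnion_vadd]
    simpa only [Set.vadd_set_inter] using Set.iUnion_inter_subset
  calc μ ({x | ⨅ i, c (x - y' i) ≤ t} ∩ X) ≤ Fintype.card ι * μ (A ∩ B) := hupper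
    _ = μ (⋃ i, y i +ᵥ (A ∩ B)) :=
      (htile _ Set.inter_subset_right ((hcm measurableSet_Iic).inter measurableSet_closedBall)).symm
    _ ≤ _ := measure_mono hlower

theorem integral_iInf_sub_le_of_tessellation (hcm : Measurable c) (hc0 : ∀ z, 0 ≤ c z) {C : ℝ}
    (hcC : ∀ z, c z ≤ C) (hc : ∀ z w : E, ‖z‖ ≤ ‖w‖ → c z ≤ c w) (hXfin : μ X ≠ ∞)
    (hcover : ⋃ i, closedBall (y i) d = X)
    (hdisj : Pairwise fun i j => μ (closedBall (y i) d ∩ closedBall (y j) d) = 0) (y' : ι → E) :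
    ∫ x in X, ⨅ i, c (x - y i) ∂μ ≤ ∫ x in X, ⨅ i, c (x - y' i) ∂μ := by
  have : IsFiniteMeasure (μ.restrict X) := isFiniteMeasure_restrict.2 hXfin
  have hmeas : ∀ y : ι → E, Measurable fun x => ⨅ i, c (x - y i) :=
    fun y => .iInf fun i => hcm.comp (measurable_id.sub_const _)
  have hnonneg : ∀ y : ι → E, 0 ≤ fun x => ⨅ i, c (x - y i) :=
    fun y x => le_ciInf fun i => hc0 _
  have hint : Integrable (fun x => ⨅ i, c (x - y' i)) (μ.restrict X) := by
    refine .of_bound (hmeas y').aestronglyMeasurable C (ae_of_all _ fun x => ?_)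
    rw [Real.norm_of_nonneg (hnonneg y' x)]
    exact (ciInf_le (Set.finite_range _).bddBelow (Classical.arbitrary ι)).trans (hcC _)
  refine integral_le_integral_of_measure_setOf_le_le (hnonneg y) (hnonneg y') (hmeas y)
    (hmeas y') hint fun t => ?_
  rw [Measure.restrict_apply (measurableSet_le (hmeas y') measurable_const),
    Measure.restrict_apply (measurableSet_le (hmeas y) measurable_const)]
  exact measure_setOf_iInf_sub_le_inter_le_of_tessellation hcm hc hcover hdisj y' t

end Tessellation

theorem stmt4_general {E : Type*} [NormedAddCommGroup E]
    [MeasurableSpace E] [BorelSpace E]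
    (μ : Measure E) [μ.IsAddHaarMeasure]
    (h : ℝ → ℝ) (hmono : Monotone h) (hnonneg : ∀ d, 0 ≤ h d)
    (Cr : ℝ) (hCr : 0 < Cr)
    (X : Set E) (hX : IsCompact X)
    (lam : ℝ) (hlam : 0 < lam)
    (k : ℕ) (hk : 0 < k)
    (S : Fin k → E)
    (d : ℝ)
    (hcover : (⋃ i : Fin k, closedBall (S i) d) = X)
    (hdisj : ∀ i j : Fin k, i ≠ j →
      μ (closedBall (S i) d ∩ closedBall (S j) d) = 0) :
    ∀ S' : Fin k → E, (∀ i, S' i ∈ X) →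
      lam * ∫ x in X, ⨅ i : Fin k, min (h ‖x - S i‖) Cr ∂μ ≤
        lam * ∫ x in X, ⨅ i : Fin k, min (h ‖x - S' i‖) Cr ∂μ := by
  intro S' _
  have : Nonempty (Fin k) := ⟨⟨0, hk⟩⟩
  refine mul_le_mul_of_nonneg_left ?_ hlam.le
  exact integral_iInf_sub_le_of_tessellation (c := fun z => min (h ‖z‖) Cr)
    ((hmono.measurable.comp measurable_norm).min measurable_const)
    (fun z => le_min (hnonneg _) hCr.le) (fun z => min_le_right _ _)
    (fun z w hzw => min_le_min_right Cr (hmono hzw)) hX.measure_lt_top.ne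
    hcover hdisj S'

/-- Corollary 2: In the continuous homogeneous setting, if for some `d > 0`
the balls `B_d(y_h)`, `h = 1,…,k`, tessellate `X` (their union is `X` and pairwise
intersections have measure zero), then the cache state `S = {y_1,…,y_k}` minimizes the
expected cost `𝒞(S) = λ ∫_X min_{y∈S} c (x - y) dx` over all sets of `k` points in `X`. -/
theorem stmt4 {E : Type*} [NormedAddCommGroup E] [NormedSpace ℝ E]
    [MeasurableSpace E] [BorelSpace E] [FiniteDimensional ℝ E]
    (μ : Measure E) [μ.IsAddHaarMeasure]
    (h : ℝ → ℝ) (hmono : Monotone h) (hnonneg : ∀ d, 0 ≤ h d)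
    (Cr : ℝ) (hCr : 0 < Cr)
    (X : Set E) (hX : IsCompact X)
    (lam : ℝ) (hlam : 0 < lam)
    (k : ℕ) (hk : 0 < k)
    (S : Fin k → E) (hS : ∀ i, S i ∈ X)
    (d : ℝ) (hd : 0 < d)
    (hcover : (⋃ i : Fin k, closedBall (S i) d) = X)
    (hdisj : ∀ i j : Fin k, i ≠ j →
      μ (closedBall (S i) d ∩ closedBall (S j) d) = 0) :
    ∀ S' : Fin k → E, (∀ i, S' i ∈ X) →
      lam * ∫ x in X, ⨅ i : Fin k, min (h ‖x - S i‖) Cr ∂μ ≤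
        lam * ∫ x in X, ⨅ i : Fin k, min (h ‖x - S' i‖) Cr ∂μ :=
  stmt4_general μ h hmono hnonneg Cr hCr X hX lam hlam k hk S d hcover hdisj
end

section
/- Let G = (V,E) be a finite undirected graph and k, ℓ ∈ ℕ. Define the similarity-caching instance with catalog X = V, retrieval cost C_r = 1, approximation cost C_a(x,y) = 0 if x = y or {x,y} ∈ E, and C_a(x,y) = +∞ otherwise, and a request sequence containing exactly one request per vertex. Then for any static cache S ⊆ V with |S| ≤ k, the total cost incurred equals |V| − |N[S]|, where N[S] is the closed neighborhood of S. Consequently, a set S of size at most k achieves total cost at most |V| − ℓ if and only if |N[S]| ≥ ℓ. -/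
open scoped ENNReal

/-!
A request for `v` is served for free exactly when some cached `y` equals or is adjacent to `v`,
i.e. when `v ∈ N[S]`; otherwise every approximation costs `∞` and the request pays the retrieval
cost `1`. Summing over the vertices counts the complement of `N[S]`.
-/

namespace SimilarityCaching

lemma min_biInf_ite_zero_top_one {ι : Type*} (S : Finset ι) (p : ι → Prop) [DecidablePred p] :
    min (⨅ y ∈ S, if p y then (0 : ℝ≥0∞) else ⊤) 1 = if ∃ y ∈ S, p y then 0 else 1 := by
  split_ifs with h
  · obtain ⟨y, hy, hp⟩ := h
    have hzero : (⨅ y ∈ S, if p y then (0 : ℝ≥0∞) else ⊤) = 0 :=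
      nonpos_iff_eq_zero.1 ((biInf_le _ hy).trans_eq (if_pos hp))
    simp [hzero]
  · push Not at h
    have htop : (⨅ y ∈ S, if p y then (0 : ℝ≥0∞) else ⊤) = ⊤ := by
      simp +contextual [h]
    simp [htop]

lemma sum_ite_mem_zero_one {V : Type*} [Fintype V] [DecidableEq V] (T : Finset V) :
    ∑ v : V, (if v ∈ T then (0 : ℝ≥0∞) else 1) = ((Fintype.card V - T.card : ℕ) : ℝ≥0∞) := by
  simp [Finset.sum_ite, Finset.filter_not, Finset.card_sdiff]

lemma mem_union_filter_adj_iff {V : Type*} [Fintype V] [DecidableEq V]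
    (G : SimpleGraph V) [DecidableRel G.Adj] (S : Finset V) (v : V) :
    v ∈ S ∪ Finset.univ.filter (fun v => ∃ u ∈ S, G.Adj u v) ↔ ∃ u ∈ S, v = u ∨ G.Adj v u := by
  simp only [Finset.mem_union, Finset.mem_filter, Finset.mem_univ, true_and, G.adj_comm]
  constructor
  · rintro (hv | ⟨u, hu, hadj⟩)
    exacts [⟨v, hv, Or.inl rfl⟩, ⟨u, hu, Or.inr hadj⟩]
  · rintro ⟨u, hu, rfl | hadj⟩
    exacts [Or.inl hu, Or.inr ⟨u, hu, hadj⟩]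

end SimilarityCaching

open SimilarityCaching in
/-- For a finite graph `G`, with catalog `V`, retrieval cost `C_r = 1`,
approximation cost `C_a(x,y) = 0` if `x = y` or `x ~ y` and `+∞` otherwise, and one request
per vertex, any static cache `S` with `|S| ≤ k` incurs total cost `|V| - |N[S]|`, and
(for `ℓ ≤ |V|`) its total cost is at most `|V| - ℓ` iff `|N[S]| ≥ ℓ`. -/
theorem stmt10 {V : Type*} [Fintype V] [DecidableEq V]
    (G : SimpleGraph V) [DecidableRel G.Adj]
    (k ℓ : ℕ) (hℓ : ℓ ≤ Fintype.card V)
    (Ca : V → V → ℝ≥0∞)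
    (hCa : ∀ x y, Ca x y = if x = y ∨ G.Adj x y then 0 else ⊤)
    (N : Finset V → Finset V)
    (hN : ∀ S : Finset V,
      N S = S ∪ Finset.univ.filter (fun v => ∃ u ∈ S, G.Adj u v)) :
    ∀ S : Finset V, S.card ≤ k →
      ((∑ v : V, min (⨅ y ∈ S, Ca v y) 1)
          = ((Fintype.card V - (N S).card : ℕ) : ℝ≥0∞) ∧
       ((∑ v : V, min (⨅ y ∈ S, Ca v y) 1) ≤ ((Fintype.card V - ℓ : ℕ) : ℝ≥0∞)
          ↔ ℓ ≤ (N S).card)) := by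
  intro S _
  have hcost : ∀ v, min (⨅ y ∈ S, Ca v y) 1 = if v ∈ N S then 0 else 1 := fun v => by
    simp only [hCa, min_biInf_ite_zero_top_one, hN, mem_union_filter_adj_iff]
  have htotal : ∑ v : V, min (⨅ y ∈ S, Ca v y) 1 = ((Fintype.card V - (N S).card : ℕ) : ℝ≥0∞) := by
    simp only [hcost, sum_ite_mem_zero_one]
  refine ⟨htotal, ?_⟩
  rw [htotal, Nat.cast_le]
  exact Nat.sub_le_sub_iff_left hℓ
end

section
/- Let X be a finite set, and for each cache state S ⊆ X with |S| = k define the expected cost 𝒞(S) = Σ_{x∈X} λ_x min(C_a(x,S), C_r), where λ_x > 0. Under the Greedy policy — which upon a request for x replaces some y ∈ S by x whenever this strictly decreases 𝒞, and otherwise leaves the cache unchanged — the sequence of cache states visited is such that no state is visited twice, hence the cache state converges in finitely many state changes, and with probability 1 the limiting state S∞ is locally optimal: 𝒞(S∞) ≤ 𝒞(S∞ ∪ {x} \ {y}) for every x ∈ X and y ∈ S∞. -/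
open MeasureTheory ProbabilityTheory
open scoped ENNReal

/-- For a finite catalog with i.i.d. requests (every object has positive
request probability), under the Greedy policy — which replaces some `y ∈ S` by the request
`x` exactly when this strictly decreases the expected cost `𝒞`, choosing a best such swap,
and otherwise leaves the cache unchanged — no cache state is visited twice (the state is
constant between repeats), the state converges after finitely many changes, and with
probability 1 the limiting state `S∞` is locally optimal:
`𝒞(S∞) ≤ 𝒞(S∞ ∪ {x} \ {y})` for every object `x` and every `y ∈ S∞`. -/
theorem stmt11 {Ω : Type*} [MeasurableSpace Ω] (μ : Measure Ω) [IsProbabilityMeasure μ]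
    {X : Type*} [Fintype X] [DecidableEq X] [MeasurableSpace X] [MeasurableSingletonClass X]
    (ν : Measure X) [IsProbabilityMeasure ν] (hν : ∀ x : X, 0 < ν {x})
    (Ca : X → X → ℝ≥0∞) (hCaa : ∀ x, Ca x x = 0)
    (Cr : ℝ≥0∞) (hCr : 0 < Cr) (hCrfin : Cr ≠ ⊤)
    (k : ℕ)
    (r : ℕ → Ω → X) (hrmeas : ∀ t, Measurable (r t))
    (hindep : iIndepFun r μ)
    (hident : ∀ t, Measure.map (r t) μ = ν)
    (cost : Finset X → ℝ≥0∞)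
    (hcost : ∀ s : Finset X, cost s = ∑ x : X, ν {x} * min (⨅ y ∈ s, Ca x y) Cr)
    (S : ℕ → Ω → Finset X) (hcard : ∀ t ω, (S t ω).card = k)
    (hgreedy : ∀ ω t,
      (S (t + 1) ω = S t ω ∧
        ∀ y ∈ S t ω, cost (S t ω) ≤ cost (insert (r t ω) ((S t ω).erase y))) ∨
      (∃ y ∈ S t ω, S (t + 1) ω = insert (r t ω) ((S t ω).erase y) ∧
        cost (S (t + 1) ω) < cost (S t ω) ∧
        ∀ y' ∈ S t ω, cost (S (t + 1) ω) ≤ cost (insert (r t ω) ((S t ω).erase y')))) :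
    (∀ ω, ∀ t t' : ℕ, t ≤ t' → S t ω = S t' ω → ∀ u, t ≤ u → u ≤ t' → S u ω = S t ω) ∧
    (∀ ω, ∃ T : ℕ, ∀ t, T ≤ t → S t ω = S T ω) ∧
    (∀ᵐ ω ∂μ, ∃ T : ℕ, (∀ t, T ≤ t → S t ω = S T ω) ∧
      ∀ x : X, ∀ y ∈ S T ω, cost (S T ω) ≤ cost (insert x ((S T ω).erase y))) := by
  classical
  have hstep : ∀ ω t, cost (S (t+1) ω) ≤ cost (S t ω) := by
    intro ω t
    rcases hgreedy ω t with ⟨h, _⟩ | ⟨y, hy, h, hlt, _⟩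
    · rw [h]
    · exact hlt.le
  have hmono : ∀ ω, Antitone fun t => cost (S t ω) :=
    fun ω => antitone_nat_of_succ_le fun n => hstep ω n
  have part1 : ∀ ω, ∀ t t' : ℕ, t ≤ t' → S t ω = S t' ω →
      ∀ u, t ≤ u → u ≤ t' → S u ω = S t ω := by
    intro ω t t' htt' heq
    have hconst : ∀ u, t ≤ u → u ≤ t' → cost (S u ω) = cost (S t ω) := by
      intro u h1 h2
      refine le_antisymm (hmono ω h1) ?_
      calc cost (S t ω) = cost (S t' ω) := by rw [heq]
        _ ≤ cost (S u ω) := hmono ω h2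
    intro u h1
    induction u, h1 using Nat.le_induction with
    | base => intro _; rfl
    | succ u hu ih =>
      intro h2
      have hu' : u ≤ t' := Nat.le_of_succ_le h2
      have hSu := ih hu'
      rcases hgreedy ω u with ⟨h, _⟩ | ⟨y, hy, _, hlt, _⟩
      · rw [h, hSu]
      · exfalso
        rw [hconst (u+1) (le_trans hu (Nat.le_succ u)) h2, hconst u hu hu'] at hlt
        exact lt_irrefl _ hlt
  have part2 : ∀ ω, ∃ T : ℕ, ∀ t, T ≤ t → S t ω = S T ω := by
    intro ω
    obtain ⟨s, hs⟩ := Finite.exists_infinite_fiber (fun t : ℕ => S t ω)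
    have hs' : {t : ℕ | S t ω = s}.Infinite := Set.infinite_coe_iff.mp hs
    obtain ⟨T, hT⟩ := hs'.nonempty
    refine ⟨T, fun t ht => ?_⟩
    obtain ⟨t', ht', htt'⟩ := hs'.exists_gt t
    have hTs : S T ω = s := hT
    have ht's : S t' ω = s := ht'
    exact part1 ω T t' (le_trans ht htt'.le) (hTs.trans ht's.symm) t ht htt'.le
  refine ⟨part1, part2, ?_⟩
  have hio : ∀ x : X, ∀ᵐ ω ∂μ, ∀ N : ℕ, ∃ t, N ≤ t ∧ r t ω = x := by
    intro x
    set A : ℕ → Set Ω := fun t => r t ⁻¹' {x} with hA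
    have hAm : ∀ t, MeasurableSet (A t) := fun t => hrmeas t (measurableSet_singleton x)
    have hAind : iIndepSet A μ := by
      rw [← iIndep_comap_mem_iff]
      exact hindep.comp (fun _ (a : X) => a ∈ ({x} : Set X))
        (fun _ => Measurable.of_discrete)
    have hAμ : ∀ t, μ (A t) = ν {x} := by
      intro t
      rw [hA, ← hident t, Measure.map_apply (hrmeas t) (measurableSet_singleton x)]
    have hsum : (∑' t, μ (A t)) = ∞ := by
      simp_rw [hAμ]
      exact ENNReal.tsum_const_eq_top_of_ne_zero (hν x).ne'
    have hone := measure_limsup_eq_one hAm hAind hsum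
    have hae : ∀ᵐ ω ∂μ, ω ∈ Filter.limsup A Filter.atTop := by
      have hms : MeasurableSet (Filter.limsup A Filter.atTop) := MeasurableSet.measurableSet_limsup hAm
      rw [ae_iff]
      have hcompl : {ω | ¬ ω ∈ Filter.limsup A Filter.atTop} = (Filter.limsup A Filter.atTop)ᶜ := rfl
      rw [hcompl, prob_compl_eq_zero_iff hms, hone]
    filter_upwards [hae] with ω hω N
    rw [Filter.mem_limsup_iff_frequently_mem, Filter.frequently_atTop] at hω
    obtain ⟨t, ht, hrt⟩ := hω N
    exact ⟨t, ht, hrt⟩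
  have hall : ∀ᵐ ω ∂μ, ∀ x : X, ∀ N : ℕ, ∃ t, N ≤ t ∧ r t ω = x := ae_all_iff.2 hio
  filter_upwards [hall] with ω hω
  obtain ⟨T, hT⟩ := part2 ω
  refine ⟨T, hT, ?_⟩
  intro x y hy
  obtain ⟨t, htT, hrt⟩ := hω x T
  have hSt : S t ω = S T ω := hT t htT
  have hSt1 : S (t+1) ω = S T ω := hT (t+1) (le_trans htT (Nat.le_succ t))
  rcases hgreedy ω t with ⟨_, h2⟩ | ⟨y', hy', _, hlt, _⟩
  · rw [hSt, hrt] at h2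
    exact h2 y hy
  · rw [hSt, hSt1] at hlt
    exact absurd hlt (lt_irrefl _)
end

section
/- Under the IRM with i.i.d. requests over a finite catalog X, for any online caching policy A, the time-average total cost satisfies liminf_{T→∞} 𝒞_A(S_1, r_T) ≥ min_S 𝒞(S) almost surely, where 𝒞_A(S_1, r_T) = (1/T) Σ_{t=1}^T [C_m(S_t, S_{t+1}) + C(r_t, S_{t+1})], C_m(T,S) = 0 if S = T, C_r if |S \ T| = 1, and +∞ otherwise, C(r,S) = min(C_a(r,S), C_r), and 𝒞(S) = Σ_x λ_x C(x,S). -/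
/-!
Since `C_m(S_t, S_{t+1}) + C(r_t, S_{t+1}) ≥ C(r_t, S_t)`, the total cost dominates the cost of
serving each request in the state it finds. The state `S_{t+1}` is a function of `r_0, …, r_t`,
and `r_{t+1}` is independent of these, so `C(r_{t+1}, S_{t+1}) - 𝒞(S_{t+1})` is a bounded
martingale difference. Martingale differences are orthogonal in `L²`, so their partial sums
satisfy `E[Q_N²] ≤ N c²`; Borel–Cantelli gives `Q_{n²}/n² → 0` almost surely, and because the
increments are bounded below this extends to `Q_N/N → 0`. Since `𝒞(S_{t+1}) ≥ min_S 𝒞(S)`, the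
time-averaged cost is asymptotically at least `min_S 𝒞(S)`.
-/
open MeasureTheory ProbabilityTheory Filter
open scoped ENNReal

/-- Service cost `C(r,S) = min(C_a(r,S), C_r)`, with `C_a(r,S) = min_{y∈S} C_a(r,y)`. -/
noncomputable def serveCost {X : Type*} (Ca : X → X → ℝ≥0∞) (Cr : ℝ≥0∞)
    (x : X) (S : Finset X) : ℝ≥0∞ :=
  min (⨅ y ∈ S, Ca x y) Cr

/-- Movement cost: `0` if the state is unchanged, `C_r` if one object is replaced,
`+∞` otherwise. -/
noncomputable def moveCost {X : Type*} [DecidableEq X] (Cr : ℝ≥0∞)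
    (T S : Finset X) : ℝ≥0∞ :=
  if S = T then 0 else if (S \ T).card = 1 then Cr else ⊤

open scoped Topology

section History

variable {Ω X : Type*}

def history (r : ℕ → Ω → X) (t : ℕ) (ω : Ω) : Fin (t + 1) → X :=
  fun i => r i ω

def partialSum (g : (t : ℕ) → (Fin (t + 1) → X) → X → ℝ) (r : ℕ → Ω → X) (N : ℕ) (ω : Ω) : ℝ :=
  ∑ t ∈ Finset.range N, g t (history r t ω) (r (t + 1) ω)

variable (g : (t : ℕ) → (Fin (t + 1) → X) → X → ℝ) (r : ℕ → Ω → X)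

lemma partialSum_succ (N : ℕ) (ω : Ω) :
    partialSum g r (N + 1) ω = partialSum g r N ω + g N (history r N ω) (r (N + 1) ω) :=
  Finset.sum_range_succ _ _

lemma exists_partialSum_eq_comp_history (N : ℕ) :
    ∃ G : (Fin (N + 1) → X) → ℝ, ∀ ω, partialSum g r N ω = G (history r N ω) := by
  induction N with
  | zero => exact ⟨fun _ => 0, fun ω => by simp [partialSum]⟩
  | succ N ih =>
    obtain ⟨G, hG⟩ := ih
    refine ⟨fun w => G (Fin.init w) + g N (Fin.init w) (w (Fin.last (N + 1))), fun ω => ?_⟩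
    rw [partialSum_succ, hG]
    rfl

end History

lemma tendsto_sum_div_of_tendsto_sum_sq_div {z : ℕ → ℝ} {c : ℝ} (hz : ∀ t, -c ≤ z t)
    (h : Tendsto (fun n : ℕ => (∑ t ∈ Finset.range (n ^ 2), z t) / (n ^ 2 : ℕ)) atTop
      (𝓝 0)) :
    Tendsto (fun N : ℕ => (∑ t ∈ Finset.range N, z t) / N) atTop (𝓝 0) := by
  set u : ℕ → ℝ := fun N => ∑ t ∈ Finset.range N, (z t + c)
  have hmono : Monotone u := monotone_nat_of_le_succ fun N => by
    simp only [u, Finset.sum_range_succ]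
    linarith [hz N]
  have hu : ∀ N : ℕ, N ≠ 0 → u N / N = (∑ t ∈ Finset.range N, z t) / N + c := by
    intro N hN
    simp only [u, Finset.sum_add_distrib, Finset.sum_const, Finset.card_range, nsmul_eq_mul]
    field_simp
  have hsq_ratio : Tendsto (fun n : ℕ => (1 + 1 / (n : ℝ)) ^ 2) atTop (𝓝 1) := by
    simpa using (tendsto_one_div_atTop_nhds_zero_nat.const_add (1 : ℝ)).pow 2
  have hlim := tendsto_div_of_monotone_of_exists_subseq_tendsto_div u c hmono fun a ha => by
    refine ⟨fun n => n ^ 2, ?_, tendsto_pow_atTop two_ne_zero, ?_⟩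
    · filter_upwards [hsq_ratio.eventually (eventually_lt_nhds ha), eventually_ne_atTop 0]
        with n hn hn0
      calc (((n + 1) ^ 2 : ℕ) : ℝ) = (1 + 1 / (n : ℝ)) ^ 2 * (n ^ 2 : ℕ) := by
            push_cast; field_simp
        _ ≤ a * (n ^ 2 : ℕ) := by gcongr
    · refine (zero_add c ▸ h.add_const c).congr' ?_
      filter_upwards [eventually_ne_atTop 0] with n hn0
      simpa using (hu (n ^ 2) (pow_ne_zero 2 hn0)).symm
  refine (hlim.sub_const c).congr' ?_ |>.trans (by simp)
  filter_upwards [eventually_ne_atTop 0] with N hN0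
  rw [hu N hN0, add_sub_cancel_right]

lemma ae_tendsto_zero_of_integral_sq_le_summable {Ω : Type*} [MeasurableSpace Ω] {μ : Measure Ω}
    {Y : ℕ → Ω → ℝ} {b : ℕ → ℝ} (hint : ∀ n, Integrable (fun ω => Y n ω ^ 2) μ)
    (hb : ∀ n, ∫ ω, Y n ω ^ 2 ∂μ ≤ b n) (hsum : Summable b) :
    ∀ᵐ ω ∂μ, Tendsto (fun n => Y n ω) atTop (𝓝 0) := by
  have hmeas : ∀ n, AEMeasurable (fun ω => ENNReal.ofReal (Y n ω ^ 2)) μ :=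
    fun n => (hint n).aemeasurable.ennreal_ofReal
  have hb0 : ∀ n, 0 ≤ b n := fun n => (integral_nonneg fun ω => sq_nonneg _).trans (hb n)
  have hlint (n : ℕ) : ∫⁻ ω, ENNReal.ofReal (Y n ω ^ 2) ∂μ ≤ ENNReal.ofReal (b n) := by
    rw [← ofReal_integral_eq_lintegral_ofReal (hint n) (ae_of_all _ fun ω => sq_nonneg _)]
    exact ENNReal.ofReal_le_ofReal (hb n)
  have hfin : ∫⁻ ω, ∑' n, ENNReal.ofReal (Y n ω ^ 2) ∂μ ≠ ⊤ := by
    rw [lintegral_tsum hmeas]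
    refine ne_top_of_le_ne_top ?_ (ENNReal.tsum_le_tsum hlint)
    rw [← ENNReal.ofReal_tsum_of_nonneg hb0 hsum]
    exact ENNReal.ofReal_ne_top
  filter_upwards [ae_lt_top' (AEMeasurable.tsum hmeas) hfin] with ω hω
  have hsq : Tendsto (fun n => Y n ω ^ 2) atTop (𝓝 0) := by
    simpa [Function.comp_def, sq_nonneg] using
      (ENNReal.tendsto_toReal ENNReal.zero_ne_top).comp
        (ENNReal.tendsto_atTop_zero_of_tsum_ne_top hω.ne)
  have habs := (Real.continuous_sqrt.tendsto 0).comp hsq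
  simp only [Function.comp_def, Real.sqrt_sq_eq_abs, Real.sqrt_zero] at habs
  exact (tendsto_zero_iff_abs_tendsto_zero _).mpr habs

lemma ofReal_le_liminf_sum_div {a : ℕ → ℝ≥0∞} {z : ℕ → ℝ} {L : ℝ}
    (hz : Tendsto (fun N : ℕ => (∑ t ∈ Finset.range N, z t) / N) atTop (𝓝 0))
    (ha : ∀ t, ENNReal.ofReal (L + z t) ≤ a (t + 1)) :
    ENNReal.ofReal L ≤
      atTop.liminf fun T : ℕ => (∑ t ∈ Finset.range T, a t) / (T : ℝ≥0∞) := by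
  set v : ℕ → ℝ := fun N => (∑ t ∈ Finset.range N, (L + z t)) / ((N + 1 : ℕ) : ℝ)
  have hv : Tendsto v atTop (𝓝 L) := by
    have hlim := ((hz.const_add L).mul (tendsto_natCast_div_add_atTop (1 : ℝ)))
    rw [add_zero, mul_one] at hlim
    refine hlim.congr' ?_
    filter_upwards [eventually_ne_atTop 0] with N hN
    simp only [v, Finset.sum_add_distrib, Finset.sum_const, Finset.card_range, nsmul_eq_mul]
    push_cast
    field_simp
  have hle : ∀ N : ℕ, ENNReal.ofReal (v N)
      ≤ (∑ t ∈ Finset.range (N + 1), a t) / ((N + 1 : ℕ) : ℝ≥0∞) := by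
    intro N
    rw [ENNReal.ofReal_div_of_pos (by positivity), ENNReal.ofReal_natCast]
    gcongr
    calc ENNReal.ofReal (∑ t ∈ Finset.range N, (L + z t))
        ≤ ∑ t ∈ Finset.range N, ENNReal.ofReal (L + z t) :=
          Finset.le_sum_of_subadditive _ ENNReal.ofReal_zero.le
            (fun _ _ => ENNReal.ofReal_add_le) _ _
      _ ≤ ∑ t ∈ Finset.range N, a (t + 1) := Finset.sum_le_sum fun t _ => ha t
      _ ≤ ∑ t ∈ Finset.range (N + 1), a t := by
          rw [Finset.sum_range_succ']
          exact le_self_add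
  calc ENNReal.ofReal L = atTop.liminf fun N => ENNReal.ofReal (v N) :=
        ((ENNReal.continuous_ofReal.tendsto L).comp hv).liminf_eq.symm
    _ ≤ atTop.liminf fun N : ℕ =>
          (∑ t ∈ Finset.range (N + 1), a t) / ((N + 1 : ℕ) : ℝ≥0∞) :=
        liminf_le_liminf (Eventually.of_forall hle)
    _ = _ := liminf_nat_add (fun T : ℕ => (∑ t ∈ Finset.range T, a t) / (T : ℝ≥0∞)) 1

section IndependentRequests

variable {Ω X : Type*} [MeasurableSpace Ω] {μ : Measure Ω} [MeasurableSpace X] {ν : Measure X}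
  {r : ℕ → Ω → X}

lemma measurable_history (hr : ∀ t, Measurable (r t)) (t : ℕ) : Measurable (history r t) :=
  measurable_pi_lambda _ fun i => hr i

lemma integrable_comp_history [IsFiniteMeasure μ] [Finite X] [MeasurableSingletonClass X]
    (hr : ∀ t, Measurable (r t)) {t : ℕ} (G : (Fin (t + 1) → X) → ℝ) :
    Integrable (fun ω => G (history r t ω)) μ :=
  Integrable.of_finite.comp_measurable (measurable_history hr t)

lemma indepFun_history_succ [Finite X] [MeasurableSingletonClass X]
    (hr : ∀ t, Measurable (r t)) (hindep : iIndepFun r μ) (t : ℕ) :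
    IndepFun (history r t) (r (t + 1)) μ := by
  have h := hindep.indepFun_finset (Finset.range (t + 1)) {t + 1} (by simp) hr
  exact h.comp (φ := fun v (i : Fin (t + 1)) => v ⟨i, Finset.mem_range.mpr i.isLt⟩)
    (ψ := fun v => v ⟨t + 1, Finset.mem_singleton_self _⟩)
    (measurable_of_finite _) (measurable_of_finite _)

lemma integral_comp_history_succ [IsFiniteMeasure μ] [Finite X] [MeasurableSingletonClass X]
    (hr : ∀ t, Measurable (r t)) (hindep : iIndepFun r μ)
    (hident : ∀ t, μ.map (r t) = ν) {t : ℕ}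
    (H : (Fin (t + 1) → X) → X → ℝ) :
    ∫ ω, H (history r t ω) (r (t + 1) ω) ∂μ = ∫ ω, ∫ x, H (history r t ω) x ∂ν ∂μ := by
  have hU := measurable_history hr t
  have hjoint :
      μ.map (fun ω => (history r t ω, r (t + 1) ω)) = (μ.map (history r t)).prod ν := by
    rw [← hident (t + 1)]
    exact (indepFun_iff_map_prod_eq_prod_map_map hU.aemeasurable (hr _).aemeasurable).mp
      (indepFun_history_succ hr hindep t)
  have : IsFiniteMeasure ν := hident 0 ▸ inferInstance
  calc ∫ ω, H (history r t ω) (r (t + 1) ω) ∂μ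
      = ∫ p, H p.1 p.2 ∂(μ.map (fun ω => (history r t ω, r (t + 1) ω))) :=
        (integral_map (hU.prodMk (hr _)).aemeasurable
          (measurable_of_finite (fun p => H p.1 p.2)).aestronglyMeasurable).symm
    _ = ∫ u, ∫ x, H u x ∂ν ∂(μ.map (history r t)) := by
        rw [hjoint, integral_prod _ Integrable.of_finite]
    _ = ∫ ω, ∫ x, H (history r t ω) x ∂ν ∂μ :=
        integral_map hU.aemeasurable
          (measurable_of_finite (fun u => ∫ x, H u x ∂ν)).aestronglyMeasurable

end IndependentRequests

section Martingale

variable {Ω X : Type*} [MeasurableSpace Ω] {μ : Measure Ω} [IsProbabilityMeasure μ]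
  [Finite X] [MeasurableSpace X] [MeasurableSingletonClass X] {ν : Measure X}
  {r : ℕ → Ω → X} {g : (t : ℕ) → (Fin (t + 1) → X) → X → ℝ}

lemma integral_mul_increment_eq_zero (hr : ∀ t, Measurable (r t)) (hindep : iIndepFun r μ)
    (hident : ∀ t, μ.map (r t) = ν) (hcent : ∀ t u, ∫ x, g t u x ∂ν = 0) {t : ℕ}
    (G : (Fin (t + 1) → X) → ℝ) :
    ∫ ω, G (history r t ω) * g t (history r t ω) (r (t + 1) ω) ∂μ = 0 := by
  rw [integral_comp_history_succ hr hindep hident (fun u x => G u * g t u x)]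
  simp [integral_const_mul, hcent]

lemma integral_partialSum_succ_sq (hr : ∀ t, Measurable (r t)) (hindep : iIndepFun r μ)
    (hident : ∀ t, μ.map (r t) = ν) (hcent : ∀ t u, ∫ x, g t u x ∂ν = 0) (N : ℕ) :
    ∫ ω, partialSum g r (N + 1) ω ^ 2 ∂μ
      = ∫ ω, partialSum g r N ω ^ 2 ∂μ + ∫ ω, g N (history r N ω) (r (N + 1) ω) ^ 2 ∂μ := by
  obtain ⟨G, hG⟩ := exists_partialSum_eq_comp_history g r N
  set Z : Ω → ℝ := fun ω => g N (history r N ω) (r (N + 1) ω)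
  have hcross : ∫ ω, partialSum g r N ω * Z ω ∂μ = 0 := by
    simp_rw [hG]
    exact integral_mul_increment_eq_zero hr hindep hident hcent G
  have hQ2 : Integrable (fun ω => partialSum g r N ω ^ 2) μ := by
    simp_rw [hG]
    exact integrable_comp_history hr fun u => G u ^ 2
  have hQZ : Integrable (fun ω => 2 * (partialSum g r N ω * Z ω)) μ := by
    simp_rw [hG]
    exact integrable_comp_history hr (t := N + 1)
      fun w => 2 * (G (Fin.init w) * g N (Fin.init w) (w (Fin.last (N + 1))))
  have hZ2 : Integrable (fun ω => Z ω ^ 2) μ :=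
    integrable_comp_history hr (t := N + 1) fun w => g N (Fin.init w) (w (Fin.last (N + 1))) ^ 2
  have hexpand : (fun ω => partialSum g r (N + 1) ω ^ 2) = fun ω =>
      partialSum g r N ω ^ 2 + 2 * (partialSum g r N ω * Z ω) + Z ω ^ 2 := by
    funext ω
    rw [partialSum_succ]
    ring
  rw [hexpand, integral_add (f := fun ω => partialSum g r N ω ^ 2
      + 2 * (partialSum g r N ω * Z ω)) (hQ2.add hQZ) hZ2,
    integral_add hQ2 hQZ, integral_const_mul, hcross, mul_zero, add_zero]

lemma integral_partialSum_sq_le (hr : ∀ t, Measurable (r t)) (hindep : iIndepFun r μ)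
    (hident : ∀ t, μ.map (r t) = ν) (hcent : ∀ t u, ∫ x, g t u x ∂ν = 0) {c : ℝ}
    (hg : ∀ t u x, |g t u x| ≤ c) (N : ℕ) :
    ∫ ω, partialSum g r N ω ^ 2 ∂μ ≤ N * c ^ 2 := by
  induction N with
  | zero => simp [partialSum]
  | succ N ih =>
    have hZ : ∫ ω, g N (history r N ω) (r (N + 1) ω) ^ 2 ∂μ ≤ c ^ 2 :=
      (integral_mono_of_nonneg (ae_of_all _ fun _ => sq_nonneg _) (integrable_const (c ^ 2))
        (ae_of_all _ fun _ => sq_le_sq.mpr ((hg _ _ _).trans (le_abs_self c)))).trans (by simp)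
    rw [integral_partialSum_succ_sq hr hindep hident hcent]
    push_cast
    linarith

theorem ae_tendsto_partialSum_div (hr : ∀ t, Measurable (r t)) (hindep : iIndepFun r μ)
    (hident : ∀ t, μ.map (r t) = ν) (hcent : ∀ t u, ∫ x, g t u x ∂ν = 0) {c : ℝ}
    (hg : ∀ t u x, |g t u x| ≤ c) :
    ∀ᵐ ω ∂μ, Tendsto (fun N : ℕ => partialSum g r N ω / N) atTop (𝓝 0) := by
  have hint (n : ℕ) : Integrable (fun ω => (partialSum g r (n ^ 2) ω / (n ^ 2 : ℕ)) ^ 2) μ := by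
    obtain ⟨G, hG⟩ := exists_partialSum_eq_comp_history g r (n ^ 2)
    simp_rw [hG]
    exact integrable_comp_history hr fun u => (G u / (n ^ 2 : ℕ)) ^ 2
  have hb (n : ℕ) :
      ∫ ω, (partialSum g r (n ^ 2) ω / (n ^ 2 : ℕ)) ^ 2 ∂μ ≤ c ^ 2 * (1 / (n : ℝ) ^ 2) := by
    simp_rw [div_pow, integral_div]
    calc (∫ ω, partialSum g r (n ^ 2) ω ^ 2 ∂μ) / ((n ^ 2 : ℕ) : ℝ) ^ 2
        ≤ (n ^ 2 : ℕ) * c ^ 2 / ((n ^ 2 : ℕ) : ℝ) ^ 2 := by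
          gcongr
          exact integral_partialSum_sq_le hr hindep hident hcent hg _
      _ = c ^ 2 * (1 / (n : ℝ) ^ 2) := by
          rcases eq_or_ne n 0 with rfl | hn
          · simp
          · push_cast; field_simp
  have hsum : Summable fun n : ℕ => c ^ 2 * (1 / (n : ℝ) ^ 2) :=
    (Real.summable_one_div_nat_pow.mpr one_lt_two).mul_left _
  filter_upwards [ae_tendsto_zero_of_integral_sq_le_summable hint hb hsum] with ω hω
  exact tendsto_sum_div_of_tendsto_sum_sq_div (fun t => (abs_le.mp (hg _ _ _)).1) hω

end Martingale

section Caching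

variable {X : Type*} (Ca : X → X → ℝ≥0∞) (Cr : ℝ≥0∞)

lemma serveCost_le (x : X) (S : Finset X) : serveCost Ca Cr x S ≤ Cr :=
  min_le_right _ _

lemma serveCost_le_moveCost_add_serveCost [DecidableEq X] (x : X) (T S : Finset X) :
    serveCost Ca Cr x T ≤ moveCost Cr T S + serveCost Ca Cr x S := by
  unfold moveCost
  split_ifs with hST hcard
  · rw [hST, zero_add]
  · exact le_add_right (serveCost_le Ca Cr x T)
  · simp

variable [Fintype X] [MeasurableSpace X] (ν : Measure X)

noncomputable def meanServeCost (S : Finset X) : ℝ :=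
  ∫ x, (serveCost Ca Cr x S).toReal ∂ν

variable {Cr}

lemma sum_mul_serveCost_ne_top [IsFiniteMeasure ν] (hCr : Cr ≠ ⊤) (S : Finset X) :
    ∑ x, ν {x} * serveCost Ca Cr x S ≠ ⊤ :=
  ENNReal.sum_ne_top.mpr fun x _ =>
    ENNReal.mul_ne_top (measure_ne_top ν _) (ne_top_of_le_ne_top hCr (serveCost_le Ca Cr x S))

variable [MeasurableSingletonClass X]

lemma integral_toReal_serveCost_sub_meanServeCost [IsProbabilityMeasure ν] (S : Finset X) :
    ∫ x, ((serveCost Ca Cr x S).toReal - meanServeCost Ca Cr ν S) ∂ν = 0 := by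
  simp [integral_sub Integrable.of_finite (integrable_const _), meanServeCost]

lemma abs_toReal_serveCost_sub_meanServeCost_le [IsProbabilityMeasure ν] (hCr : Cr ≠ ⊤)
    (x : X) (S : Finset X) :
    |(serveCost Ca Cr x S).toReal - meanServeCost Ca Cr ν S| ≤ Cr.toReal := by
  have hserve : ∀ y, (serveCost Ca Cr y S).toReal ≤ Cr.toReal :=
    fun y => ENNReal.toReal_mono hCr (serveCost_le Ca Cr y S)
  have hmean : meanServeCost Ca Cr ν S ≤ Cr.toReal :=
    (integral_mono Integrable.of_finite (integrable_const _) hserve).trans (by simp)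
  exact abs_sub_le_of_nonneg_of_le ENNReal.toReal_nonneg (hserve x)
    (integral_nonneg fun _ => ENNReal.toReal_nonneg) hmean

lemma toReal_sum_mul_serveCost [IsFiniteMeasure ν] (hCr : Cr ≠ ⊤) (S : Finset X) :
    (∑ x, ν {x} * serveCost Ca Cr x S).toReal = meanServeCost Ca Cr ν S := by
  rw [meanServeCost, integral_fintype Integrable.of_finite, ENNReal.toReal_sum fun x _ =>
    ENNReal.mul_ne_top (measure_ne_top ν _) (ne_top_of_le_ne_top hCr (serveCost_le Ca Cr x S))]
  simp [ENNReal.toReal_mul, measureReal_def]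

lemma ofReal_add_toReal_serveCost_sub_meanServeCost_le [IsFiniteMeasure ν] (hCr : Cr ≠ ⊤)
    {m : ℝ≥0∞} {S : Finset X} (hm : m ≤ ∑ x, ν {x} * serveCost Ca Cr x S) (x : X) :
    ENNReal.ofReal (m.toReal + ((serveCost Ca Cr x S).toReal - meanServeCost Ca Cr ν S))
      ≤ serveCost Ca Cr x S := by
  have hmean : m.toReal ≤ meanServeCost Ca Cr ν S := by
    rw [← toReal_sum_mul_serveCost Ca ν hCr]
    exact ENNReal.toReal_mono (sum_mul_serveCost_ne_top Ca ν hCr S) hm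
  calc ENNReal.ofReal (m.toReal + ((serveCost Ca Cr x S).toReal - meanServeCost Ca Cr ν S))
      ≤ ENNReal.ofReal (serveCost Ca Cr x S).toReal := by
        gcongr
        linarith
    _ = serveCost Ca Cr x S :=
        ENNReal.ofReal_toReal (ne_top_of_le_ne_top hCr (serveCost_le Ca Cr x S))

end Caching

theorem stmt12_general {Ω : Type*} [MeasurableSpace Ω] (μ : Measure Ω) [IsProbabilityMeasure μ]
    {X : Type*} [Fintype X] [DecidableEq X] [MeasurableSpace X] [MeasurableSingletonClass X]
    (ν : Measure X) [IsProbabilityMeasure ν]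
    (Ca : X → X → ℝ≥0∞) (Cr : ℝ≥0∞) (hCrfin : Cr ≠ ⊤)
    (k : ℕ)
    (r : ℕ → Ω → X) (hrmeas : ∀ t, Measurable (r t))
    (hindep : iIndepFun (m := fun _ : ℕ => ‹MeasurableSpace X›) r μ)
    (hident : ∀ t, Measure.map (r t) μ = ν)
    (S : ℕ → Ω → Finset X) (hcard : ∀ t ω, (S t ω).card = k)
    (A : (t : ℕ) → (Fin (t + 1) → X) → Finset X)
    (hS : ∀ t ω, S (t + 1) ω = A t (fun i => r i.val ω)) :
    ∀ᵐ ω ∂μ,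
      (⨅ s : {s : Finset X // s.card = k}, ∑ x : X, ν {x} * serveCost Ca Cr x s.val) ≤
        atTop.liminf (fun T : ℕ =>
          (∑ t ∈ Finset.range T,
            (moveCost Cr (S t ω) (S (t + 1) ω) + serveCost Ca Cr (r t ω) (S (t + 1) ω)))
          / (T : ℝ≥0∞)) := by
  set g : (t : ℕ) → (Fin (t + 1) → X) → X → ℝ := fun t u x =>
    (serveCost Ca Cr x (A t u)).toReal - meanServeCost Ca Cr ν (A t u)
  filter_upwards [ae_tendsto_partialSum_div hrmeas hindep hident
    (fun t u => integral_toReal_serveCost_sub_meanServeCost Ca ν (A t u))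
    (fun t u x => abs_toReal_serveCost_sub_meanServeCost_le Ca ν hCrfin x (A t u))] with ω hω
  have hm_le (t : ℕ) :
      (⨅ s : {s : Finset X // s.card = k}, ∑ x, ν {x} * serveCost Ca Cr x s.val)
        ≤ ∑ x, ν {x} * serveCost Ca Cr x (S t ω) :=
    iInf_le (fun s : {s : Finset X // s.card = k} => ∑ x, ν {x} * serveCost Ca Cr x s.val)
      ⟨S t ω, hcard t ω⟩
  rw [← ENNReal.ofReal_toReal (ne_top_of_le_ne_top (sum_mul_serveCost_ne_top Ca ν hCrfin _)
    (hm_le 0))]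
  -- `S 0` is not chosen by the policy, so the first request is left out of the comparison.
  refine ofReal_le_liminf_sum_div hω fun t => ?_
  have hA : A t (history r t ω) = S (t + 1) ω := (hS t ω).symm
  calc _ ≤ serveCost Ca Cr (r (t + 1) ω) (S (t + 1) ω) := by
        simp only [hA]
        exact ofReal_add_toReal_serveCost_sub_meanServeCost_le Ca ν hCrfin (hm_le (t + 1)) _
    _ ≤ _ := serveCost_le_moveCost_add_serveCost Ca Cr _ _ _

/-- Under the IRM with i.i.d. requests over a finite catalog, for any online
caching policy (the state `S_{t+1}` is chosen after seeing `r_0,…,r_t`), almost surely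
`liminf_T (1/T) ∑_{t<T} [C_m(S_t,S_{t+1}) + C(r_t,S_{t+1})] ≥ min_S 𝒞(S)`,
where `𝒞(S) = ∑_x λ_x C(x,S)` with `λ_x = ν{x}` the request probabilities. -/
theorem stmt12 {Ω : Type*} [MeasurableSpace Ω] (μ : Measure Ω) [IsProbabilityMeasure μ]
    {X : Type*} [Fintype X] [DecidableEq X] [MeasurableSpace X] [MeasurableSingletonClass X]
    (ν : Measure X) [IsProbabilityMeasure ν]
    (Ca : X → X → ℝ≥0∞) (Cr : ℝ≥0∞) (hCr : 0 < Cr) (hCrfin : Cr ≠ ⊤)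
    (k : ℕ)
    (r : ℕ → Ω → X) (hrmeas : ∀ t, Measurable (r t))
    (hindep : iIndepFun (m := fun _ : ℕ => ‹MeasurableSpace X›) r μ)
    (hident : ∀ t, Measure.map (r t) μ = ν)
    (S : ℕ → Ω → Finset X) (hcard : ∀ t ω, (S t ω).card = k)
    (A : (t : ℕ) → (Fin (t + 1) → X) → Finset X)
    (hS : ∀ t ω, S (t + 1) ω = A t (fun i => r i.val ω)) :
    ∀ᵐ ω ∂μ,
      (⨅ s : {s : Finset X // s.card = k}, ∑ x : X, ν {x} * serveCost Ca Cr x s.val) ≤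
        atTop.liminf (fun T : ℕ =>
          (∑ t ∈ Finset.range T,
            (moveCost Cr (S t ω) (S (t + 1) ω) + serveCost Ca Cr (r t ω) (S (t + 1) ω)))
          / (T : ℝ≥0∞)) :=
  stmt12_general μ ν Ca Cr hCrfin k r hrmeas hindep hident S hcard A hS
end

section
/- Let γ > 0, let X ⊂ ℝ² be a domain partitioned into M unit-area regions with constant request rates λ_1 ≥ λ_2 ≥ … ≥ λ_M > 0, and suppose region i with k_i cache slots incurs cost λ_i·(ζ k̄^{−γ/2} + C_r(1 − k_i/k̄)) if k_i < k̄ and λ_i ζ k_i^{−γ/2} if k_i ≥ k̄, where k̄ = 1/(2 C_r^{2/γ}) and ζ = 2^{(2−γ)/2}/(γ+2). If an allocation (k_1,…,k_M) with Σ_i k_i = k has indices i < j with k_i < k̄ and k_j > 0, then the allocation obtained by transferring min(k̄ − k_i, k_j) slots from region j to region i has total cost no larger than the original allocation. -/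
/-!
Below `k̄` the unit cost is affine with slope `-C_r/k̄`; above `k̄` it is `ζ x^(-γ/2)`, whose
slope never exceeds `C_r/k̄` in absolute value, because for the given `k̄` and `ζ` one has
`ζ (γ/2) k̄^(-γ/2) = γ C_r/(γ+2) ≤ C_r`. Hence moving `δ` slots into region `i` (staying at or
below `k̄`) saves exactly `λ_i C_r δ/k̄`, while removing them from region `j` costs at most
`λ_j C_r δ/k̄ ≤ λ_i C_r δ/k̄`.
-/

open Finset Function

/-- The cost per unit request rate of a region holding `x` slots. -/
noncomputable def unitCost (γ Cr kbar ζ x : ℝ) : ℝ :=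
  if x < kbar then ζ * kbar ^ (-(γ / 2)) + Cr * (1 - x / kbar) else ζ * x ^ (-(γ / 2))

lemma sum_apply_update {ι : Type*} [Fintype ι] [DecidableEq ι] (G : ι → ℝ → ℝ) (K : ι → ℝ)
    (i : ι) (u : ℝ) :
    ∑ l, G l (update K i u l) = ∑ l, G l (K l) + (G i u - G i (K i)) := by
  rw [funext (apply_update G K i u), sum_update_of_mem (mem_univ i),
    sum_eq_add_sum_sdiff_singleton_of_mem (mem_univ i) fun l => G l (K l)]
  ring

lemma rpow_neg_sub_rpow_neg_le {p a x y : ℝ} (hp : 0 ≤ p) (ha : 0 < a) (hax : a ≤ x)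
    (hxy : x ≤ y) : x ^ (-p) - y ^ (-p) ≤ p * a ^ (-p - 1) * (y - x) := by
  rcases hxy.eq_or_lt with rfl | hxy
  · simp
  have hderiv : ∀ c ∈ Set.Ioo x y, HasDerivAt (· ^ (-p)) (-p * c ^ (-p - 1)) c :=
    fun c hc => Real.hasDerivAt_rpow_const (Or.inl (by linarith [hc.1]))
  have hcont : ContinuousOn (· ^ (-p)) (Set.Icc x y) :=
    fun c hc => (Real.continuousAt_rpow_const _ _ (Or.inl (by linarith [hc.1]))).continuousWithinAt
  obtain ⟨c, hc, hslope⟩ := exists_hasDerivAt_eq_slope _ _ hxy hcont hderiv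
  have hca : c ^ (-p - 1) ≤ a ^ (-p - 1) :=
    Real.rpow_le_rpow_of_nonpos ha (by linarith [hc.1]) (by linarith)
  rw [eq_div_iff (by linarith)] at hslope
  nlinarith [mul_le_mul_of_nonneg_left hca (mul_nonneg hp (sub_nonneg.2 hxy.le))]

section unitCost

variable {γ Cr kbar ζ : ℝ}

lemma unitCost_of_le {x : ℝ} (hkbar : 0 < kbar) (hx : x ≤ kbar) :
    unitCost γ Cr kbar ζ x = ζ * kbar ^ (-(γ / 2)) + Cr * (1 - x / kbar) := by
  rcases hx.lt_or_eq with hx | rfl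
  · simp [unitCost, hx]
  · simp [unitCost, hkbar.ne']

lemma unitCost_sub_eq_of_le {x y : ℝ} (hkbar : 0 < kbar) (hy : y ≤ kbar) (hxy : x ≤ y) :
    unitCost γ Cr kbar ζ x - unitCost γ Cr kbar ζ y = Cr / kbar * (y - x) := by
  rw [unitCost_of_le hkbar (hxy.trans hy), unitCost_of_le hkbar hy]
  field_simp
  ring

lemma unitCost_sub_le (hγ : 0 ≤ γ) (hkbar : 0 < kbar) (hζ : 0 ≤ ζ)
    (hslope : ζ * (γ / 2) * kbar ^ (-(γ / 2)) ≤ Cr) {x y : ℝ} (hxy : x ≤ y) :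
    unitCost γ Cr kbar ζ x - unitCost γ Cr kbar ζ y ≤ Cr / kbar * (y - x) := by
  have hpow : ∀ {u v}, kbar ≤ u → u ≤ v →
      ζ * u ^ (-(γ / 2)) - ζ * v ^ (-(γ / 2)) ≤ Cr / kbar * (v - u) := by
    intro u v hu huv
    have h := rpow_neg_sub_rpow_neg_le (p := γ / 2) (by positivity) hkbar hu huv
    rw [Real.rpow_sub hkbar, Real.rpow_one] at h
    calc ζ * u ^ (-(γ / 2)) - ζ * v ^ (-(γ / 2))
        ≤ ζ * (γ / 2 * (kbar ^ (-(γ / 2)) / kbar) * (v - u)) := by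
          rw [← mul_sub]; exact mul_le_mul_of_nonneg_left h hζ
      _ = ζ * (γ / 2) * kbar ^ (-(γ / 2)) / kbar * (v - u) := by ring
      _ ≤ Cr / kbar * (v - u) := by gcongr
  rcases le_or_gt y kbar with hy | hy
  · exact (unitCost_sub_eq_of_le hkbar hy hxy).le
  have hy' : unitCost γ Cr kbar ζ y = ζ * y ^ (-(γ / 2)) := if_neg hy.not_gt
  rcases le_or_gt kbar x with hx | hx
  · rw [unitCost, if_neg hx.not_gt, hy']
    exact hpow hx hxy
  · have hlinear := unitCost_sub_eq_of_le (γ := γ) (Cr := Cr) (ζ := ζ) hkbar le_rfl hx.le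
    have hkbar' : unitCost γ Cr kbar ζ kbar = ζ * kbar ^ (-(γ / 2)) := if_neg (lt_irrefl _)
    have hpower := hpow le_rfl hy.le
    rw [hy']
    linarith

end unitCost

lemma kbar_rpow_neg {γ Cr : ℝ} (hγ : 0 < γ) (hCr : 0 < Cr) :
    (1 / (2 * Cr ^ (2 / γ))) ^ (-(γ / 2)) = 2 ^ (γ / 2) * Cr := by
  have h2 : (0 : ℝ) ≤ 2 * Cr ^ (2 / γ) := by positivity
  rw [one_div, Real.inv_rpow h2, Real.rpow_neg h2, inv_inv,
    Real.mul_rpow zero_le_two (by positivity), ← Real.rpow_mul hCr.le,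
    show 2 / γ * (γ / 2) = 1 by field_simp, Real.rpow_one]

lemma zeta_mul_kbar_rpow_neg {γ Cr : ℝ} (hγ : 0 < γ) (hCr : 0 < Cr) :
    2 ^ ((2 - γ) / 2) / (γ + 2) * (γ / 2) * (1 / (2 * Cr ^ (2 / γ))) ^ (-(γ / 2)) =
      γ / (γ + 2) * Cr := by
  have h2 : (2 : ℝ) ^ ((2 - γ) / 2) * 2 ^ (γ / 2) = 2 := by
    rw [← Real.rpow_add two_pos, show (2 - γ) / 2 + γ / 2 = 1 by ring, Real.rpow_one]
  rw [kbar_rpow_neg hγ hCr]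
  linear_combination γ * Cr / 2 / (γ + 2) * h2

theorem stmt16_general (γ Cr : ℝ) (hγ : 0 < γ) (hCr : 0 < Cr)
    (M : ℕ) (lam : Fin M → ℝ) (hlam : ∀ i, 0 < lam i) (hmono : Antitone lam)
    (kbar ζ : ℝ) (hkbar : kbar = 1 / (2 * Cr ^ (2 / γ)))
    (hζ : ζ = 2 ^ ((2 - γ) / 2) / (γ + 2))
    (c : ℝ → ℝ → ℝ)
    (hc : ∀ l x, c l x =
      if x < kbar then l * (ζ * kbar ^ (-(γ / 2)) + Cr * (1 - x / kbar))
      else l * ζ * x ^ (-(γ / 2)))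
    (K : Fin M → ℝ)
    (i j : Fin M) (hij : i < j) (hi : K i < kbar) (hj : 0 < K j)
    (δ : ℝ) (hδ : δ = min (kbar - K i) (K j))
    (K' : Fin M → ℝ)
    (hK' : K' = Function.update (Function.update K i (K i + δ)) j (K j - δ)) :
    ∑ l, c (lam l) (K' l) ≤ ∑ l, c (lam l) (K l) := by
  have hkbar0 : 0 < kbar := by rw [hkbar]; positivity
  have hζ0 : 0 ≤ ζ := by rw [hζ]; positivity
  have hslope : ζ * (γ / 2) * kbar ^ (-(γ / 2)) ≤ Cr := by
    rw [hζ, hkbar, zeta_mul_kbar_rpow_neg hγ hCr]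
    exact mul_le_of_le_one_left hCr.le ((div_le_one (by linarith)).2 (by linarith))
  have hcost : ∀ l x, c l x = l * unitCost γ Cr kbar ζ x := by
    intro l x
    rw [hc, unitCost]
    split_ifs <;> ring
  have hδ0 : 0 ≤ δ := hδ ▸ le_min (by linarith) hj.le
  have hδi : δ ≤ kbar - K i := hδ ▸ min_le_left _ _
  have gain := unitCost_sub_eq_of_le (γ := γ) (Cr := Cr) (ζ := ζ) hkbar0
    (show K i + δ ≤ kbar by linarith) (le_add_of_nonneg_right hδ0)
  rw [add_sub_cancel_left] at gain
  have loss := unitCost_sub_le hγ.le hkbar0 hζ0 hslope (sub_le_self (K j) hδ0)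
  rw [sub_sub_cancel] at loss
  have hrate : lam j * (Cr / kbar * δ) ≤ lam i * (Cr / kbar * δ) :=
    mul_le_mul_of_nonneg_right (hmono hij.le) (by positivity)
  rw [hK', sum_apply_update _ _ j, sum_apply_update _ _ i, update_of_ne hij.ne', hcost, hcost,
    hcost, hcost]
  linarith [mul_le_mul_of_nonneg_left loss (hlam j).le, congrArg (lam i * ·) gain]

/-- Exchange argument for cache-slot allocation with finite `C_r`.
Region `l` with `x` slots costs `λ_l (ζ k̄^(-γ/2) + C_r (1 - x/k̄))` if `x < k̄` and
`λ_l ζ x^(-γ/2)` if `x ≥ k̄`, where `k̄ = 1/(2 C_r^(2/γ))` and `ζ = 2^((2-γ)/2)/(γ+2)`.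
If rates are non-increasing (`λ_1 ≥ … ≥ λ_M`) and an allocation has `i < j` with
`K_i < k̄` and `K_j > 0`, then transferring `min(k̄ - K_i, K_j)` slots from `j` to `i`
does not increase the total cost. -/
theorem stmt16 (γ Cr : ℝ) (hγ : 0 < γ) (hCr : 0 < Cr)
    (M : ℕ) (lam : Fin M → ℝ) (hlam : ∀ i, 0 < lam i) (hmono : Antitone lam)
    (kbar ζ : ℝ) (hkbar : kbar = 1 / (2 * Cr ^ (2 / γ)))
    (hζ : ζ = 2 ^ ((2 - γ) / 2) / (γ + 2))
    (c : ℝ → ℝ → ℝ)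
    (hc : ∀ l x, c l x =
      if x < kbar then l * (ζ * kbar ^ (-(γ / 2)) + Cr * (1 - x / kbar))
      else l * ζ * x ^ (-(γ / 2)))
    (K : Fin M → ℝ) (hKpos : ∀ i, 0 ≤ K i)
    (kk : ℝ) (hsum : ∑ i, K i = kk)
    (i j : Fin M) (hij : i < j) (hi : K i < kbar) (hj : 0 < K j)
    (δ : ℝ) (hδ : δ = min (kbar - K i) (K j))
    (K' : Fin M → ℝ)
    (hK' : K' = Function.update (Function.update K i (K i + δ)) j (K j - δ)) :
    ∑ l, c (lam l) (K' l) ≤ ∑ l, c (lam l) (K l) :=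
  stmt16_general γ Cr hγ hCr M lam hlam hmono kbar ζ hkbar hζ c hc K i j hij hi hj δ hδ K' hK'
end
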